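/- arXiv:2410.15739 — 3 statements merged into one kernel-verified Lean document; each statement's English description precedes it below -/
import Mathlib

section
/- For any strict partition λ and any n ≥ ℓ(λ), the number of shifted set-valued semistandard tableaux of shape λ with entries from the alphabet {1' < 1 < 2' < 2 < ... < n' < n} satisfying the P-condition (no primed entries on the main diagonal) is odd. -/
open Finset

/- Letters of the alphabet `{1' < 1 < 2' < 2 < … < n' < n}` are encoded as
natural numbers: `2*k - 1` encodes the primed letter `k'` and `2*k` encodes the
unprimed letter `k`.  The usual order on `ℕ` then matches the alphabet order. -/

/-- A strict partition: a strictly decreasing list of positive integers. -/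
def IsStrictPartition (lam : List ℕ) : Prop :=
  lam.Chain' (· > ·) ∧ ∀ p ∈ lam, 0 < p

/-- Cells of the shifted skew Young diagram of `λ/μ` (rows are 1-indexed):
`(i,j)` with `1 ≤ i ≤ ℓ(λ)` and `μ_i + i ≤ j ≤ λ_i + i - 1`. -/
def sCells (lam mu : List ℕ) : Finset (ℕ × ℕ) :=
  (Finset.range (lam.length + 1) ×ˢ
      Finset.range (lam.length + lam.foldr max 0 + 1)).filter
    (fun c => 1 ≤ c.1 ∧ c.1 ≤ lam.length ∧
      mu.getD (c.1 - 1) 0 + c.1 ≤ c.2 ∧ c.2 ≤ lam.getD (c.1 - 1) 0 + c.1 - 1)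

/-- Shifted skew set-valued semistandard tableau of Q-type of shape `λ/μ`,
with letters from `{1' < 1 < … < n' < n}` (encoded in `[1, 2n]`). -/
structure IsSSVTQ (lam mu : List ℕ) (n : ℕ) (T : ℕ × ℕ → Finset ℕ) : Prop where
  support : ∀ c, c ∉ sCells lam mu → T c = ∅
  cellNonempty : ∀ c ∈ sCells lam mu, (T c).Nonempty
  inRange : ∀ c, ∀ a ∈ T c, 1 ≤ a ∧ a ≤ 2 * n
  rowWeak : ∀ i j, (i, j) ∈ sCells lam mu → (i, j + 1) ∈ sCells lam mu →
      ∀ a ∈ T (i, j), ∀ b ∈ T (i, j + 1), a ≤ b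
  colWeak : ∀ i j, (i, j) ∈ sCells lam mu → (i + 1, j) ∈ sCells lam mu →
      ∀ a ∈ T (i, j), ∀ b ∈ T (i + 1, j), a ≤ b
  colOnce : ∀ a, a % 2 = 0 → ∀ i i' j, a ∈ T (i, j) → a ∈ T (i', j) → i = i'
  rowOnce : ∀ a, a % 2 = 1 → ∀ i j j', a ∈ T (i, j) → a ∈ T (i, j') → j = j'

/-- P-type: additionally no primed (odd-encoded) letters on the main diagonal. -/
def IsSSVTP (lam mu : List ℕ) (n : ℕ) (T : ℕ × ℕ → Finset ℕ) : Prop :=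
  IsSSVTQ lam mu n T ∧ ∀ i, ∀ a ∈ T (i, i), a % 2 = 0

/-- `|T|`: total number of letters placed in the tableau. -/
def tabSize (lam mu : List ℕ) (T : ℕ × ℕ → Finset ℕ) : ℕ :=
  ∑ c ∈ sCells lam mu, (T c).card

/-- `ω_k(T)`: number of occurrences of `k` and `k'` in `T`. -/
def tabWeight (lam mu : List ℕ) (T : ℕ × ℕ → Finset ℕ) (k : ℕ) : ℕ :=
  ∑ c ∈ sCells lam mu, ((T c).filter (fun a => (a + 1) / 2 = k)).card

/-- Total entry sum of a tableau, where the letter encoded by `a` has value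
`a/2` (so `k'` counts as `k - 1/2` and `k` counts as `k`). -/
def entrySum (lam mu : List ℕ) (T : ℕ × ℕ → Finset ℕ) : ℚ :=
  ∑ c ∈ sCells lam mu, ∑ a ∈ T c, (a : ℚ) / 2

/-- The minimal straight-shape P-tableau `T_P`, with `(T_P)_{i,j} = {i}`. -/
def TminP (lam : List ℕ) : ℕ × ℕ → Finset ℕ :=
  fun c => if c ∈ sCells lam [] then {2 * c.1} else ∅

/-- The minimal straight-shape Q-tableau `T_Q`, with `(T_Q)_{i,i} = {i'}` and
`(T_Q)_{i,j} = {i}` off the diagonal. -/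
def TminQ (lam : List ℕ) : ℕ × ℕ → Finset ℕ :=
  fun c => if c ∈ sCells lam [] then
    (if c.1 = c.2 then {2 * c.1 - 1} else {2 * c.1}) else ∅

/-- Specialization of the K-theoretic (skew) Schur P-function
`GP_{λ/μ}(x₁,…,xₙ | β) = Σ_T β^{|T|-|λ/μ|} x^{ω(T)}`. -/
noncomputable def GPspec (lam mu : List ℕ) (n : ℕ) (x : ℕ → ℚ) (β : ℚ) : ℚ :=
  ∑ᶠ T ∈ {T : ℕ × ℕ → Finset ℕ | IsSSVTP lam mu n T},
    β ^ (tabSize lam mu T - (lam.sum - mu.sum)) *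
      ∏ k ∈ Finset.Icc 1 n, x k ^ tabWeight lam mu T k

/-- Specialization of the K-theoretic (skew) Schur Q-function. -/
noncomputable def GQspec (lam mu : List ℕ) (n : ℕ) (x : ℕ → ℚ) (β : ℚ) : ℚ :=
  ∑ᶠ T ∈ {T : ℕ × ℕ → Finset ℕ | IsSSVTQ lam mu n T},
    β ^ (tabSize lam mu T - (lam.sum - mu.sum)) *
      ∏ k ∈ Finset.Icc 1 n, x k ^ tabWeight lam mu T k

/-- Schur P-polynomial: sum of `x^{ω(T)}` over shifted semistandard tableaux
(set-valued tableaux all of whose cells are singletons), P-condition. -/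
noncomputable def Ppoly (lam : List ℕ) (n : ℕ) (x : ℕ → ℚ) : ℚ :=
  ∑ᶠ T ∈ {T : ℕ × ℕ → Finset ℕ | IsSSVTP lam [] n T ∧
      ∀ c ∈ sCells lam [], (T c).card = 1},
    ∏ k ∈ Finset.Icc 1 n, x k ^ tabWeight lam [] T k

/-- Schur Q-polynomial (no diagonal restriction). -/
noncomputable def Qpoly (lam : List ℕ) (n : ℕ) (x : ℕ → ℚ) : ℚ :=
  ∑ᶠ T ∈ {T : ℕ × ℕ → Finset ℕ | IsSSVTQ lam [] n T ∧
      ∀ c ∈ sCells lam [], (T c).card = 1},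
    ∏ k ∈ Finset.Icc 1 n, x k ^ tabWeight lam [] T k

/-- Rows of `μ` containing a removable box: row `i` (1-indexed) is removable
iff decreasing `μ_i` by one again yields a strict partition. -/
def remRows (mu : List ℕ) : Finset ℕ :=
  (Finset.Icc 1 mu.length).filter
    (fun i => mu.getD i 0 + 1 < mu.getD (i - 1) 0 ∨ mu.getD (i - 1) 0 = 1)

/-- Remove one box from each row in `B` (rows 1-indexed). -/
def removeRows (mu : List ℕ) (B : Finset ℕ) : List ℕ :=
  mu.mapIdx (fun i p => if i + 1 ∈ B then p - 1 else p)

/-- Strictly decreasing list of naturals, allowing trailing zeros. -/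
def IsStrictPartitionZ (l : List ℕ) : Prop :=
  l.Chain' (fun a b => b < a ∨ b = 0)

/-- `μ ⊆ λ` componentwise (with `μ` padded by zeros). -/
def SubPartition (mu lam : List ℕ) : Prop :=
  mu.length ≤ lam.length ∧ ∀ i, mu.getD i 0 ≤ lam.getD i 0

namespace SSVTodd

lemma getD_le_foldr (lam : List ℕ) : ∀ i, lam.getD i 0 ≤ lam.foldr max 0 := by
  induction lam with
  | nil => intro i; simp [List.getD]
  | cons a l ih =>
    intro i
    cases i with
    | zero => simp [List.getD]
    | succ k => simpa [List.getD] using le_trans (ih k) (le_max_right _ _)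

lemma mem_sCells {lam : List ℕ} {c : ℕ × ℕ} :
    c ∈ sCells lam [] ↔ 1 ≤ c.1 ∧ c.1 ≤ lam.length ∧ c.1 ≤ c.2 ∧
      c.2 ≤ lam.getD (c.1 - 1) 0 + c.1 - 1 := by
  have hnil : List.getD ([] : List ℕ) (c.1 - 1) 0 = 0 := by simp [List.getD]
  simp only [sCells, Finset.mem_filter, Finset.mem_product, Finset.mem_range, hnil]
  constructor
  · rintro ⟨⟨h1, h2⟩, h3, h4, h5, h6⟩
    refine ⟨h3, h4, by omega, h6⟩
  · rintro ⟨h3, h4, h5, h6⟩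
    have := getD_le_foldr lam (c.1 - 1)
    exact ⟨⟨by omega, by omega⟩, h3, h4, by omega, h6⟩

lemma getD_add_le {lam : List ℕ} (hs : lam.Chain' (· > ·)) :
    ∀ d s, s + d < lam.length → lam.getD (s + d) 0 + d ≤ lam.getD s 0 := by
  have hcons : ∀ i, i + 1 < lam.length → lam.getD (i + 1) 0 < lam.getD i 0 := by
    intro i hi
    have h := List.isChain_iff_getElem.mp hs i (by omega)
    have h1 : lam.getD i 0 = lam.get ⟨i, by omega⟩ := by
      rw [List.getD_eq_getElem lam 0 (by omega)]; simp
    have h2 : lam.getD (i+1) 0 = lam.get ⟨i+1, by omega⟩ := by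
      rw [List.getD_eq_getElem lam 0 (by omega)]; simp
    rw [h1, h2]; exact h
  intro d
  induction d with
  | zero => intro s _; simp
  | succ k ih =>
    intro s hsk
    have h1 := ih (s+1) (by omega)
    have h2 := hcons s (by omega)
    have : s + 1 + k = s + (k+1) := by omega
    rw [this] at h1
    omega

lemma col_interval {lam : List ℕ} (hs : lam.Chain' (· > ·)) {i k i' j : ℕ}
    (h1 : (i, j) ∈ sCells lam []) (h2 : (i', j) ∈ sCells lam [])
    (hik : i ≤ k) (hki : k ≤ i') : (k, j) ∈ sCells lam [] := by
  rw [mem_sCells] at h1 h2 ⊢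
  simp only at *
  obtain ⟨a1, a2, a3, a4⟩ := h1
  obtain ⟨b1, b2, b3, b4⟩ := h2
  refine ⟨by omega, by omega, by omega, ?_⟩
  rcases eq_or_lt_of_le hki with rfl | hlt
  · exact b4
  have := getD_add_le hs (i' - 1 - (k-1)) (k-1) (by omega)
  have hrw : k - 1 + (i' - 1 - (k - 1)) = i' - 1 := by omega
  rw [hrw] at this
  omega

lemma row_interval {lam : List ℕ} {i k j j' : ℕ}
    (h1 : (i, j) ∈ sCells lam []) (h2 : (i, j') ∈ sCells lam [])
    (hik : j ≤ k) (hki : k ≤ j') : (i, k) ∈ sCells lam [] := by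
  rw [mem_sCells] at h1 h2 ⊢
  simp only at *
  omega

section Fixed

variable {lam : List ℕ} {n : ℕ}

/-- column chain inequality -/
lemma col_chain (hs : lam.Chain' (· > ·)) {T : ℕ × ℕ → Finset ℕ}
    (hT : IsSSVTQ lam [] n T) {i i' j x y : ℕ}
    (hi : (i, j) ∈ sCells lam []) (hi' : (i', j) ∈ sCells lam [])
    (hlt : i < i') (hx : x ∈ T (i, j)) (hy : y ∈ T (i', j)) : x ≤ y := by
  induction i', hlt using Nat.le_induction generalizing y with
  | base => exact hT.colWeak i j hi hi' x hx y hy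
  | succ i' hii ih =>
    have hmid : (i', j) ∈ sCells lam [] := col_interval hs hi hi' (by omega) (by omega)
    obtain ⟨z, hz⟩ := hT.cellNonempty _ hmid
    exact le_trans (ih hmid hz) (hT.colWeak i' j hmid hi' z hz y hy)

/-- row chain inequality -/
lemma row_chain {T : ℕ × ℕ → Finset ℕ}
    (hT : IsSSVTQ lam [] n T) {i j j' x y : ℕ}
    (hi : (i, j) ∈ sCells lam []) (hi' : (i, j') ∈ sCells lam [])
    (hlt : j < j') (hx : x ∈ T (i, j)) (hy : y ∈ T (i, j')) : x ≤ y := by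
  induction j', hlt using Nat.le_induction generalizing y with
  | base => exact hT.rowWeak i j hi hi' x hx y hy
  | succ j' hjj ih =>
    have hmid : (i, j') ∈ sCells lam [] := row_interval hi hi' (by omega) (by omega)
    obtain ⟨z, hz⟩ := hT.cellNonempty _ hmid
    exact le_trans (ih hmid hz) (hT.rowWeak i j' hmid hi' z hz y hy)

end Fixed

/-- `a` may be inserted into cell `c` (given also `a` is below the max of `T c`). -/
def Addable (T : ℕ × ℕ → Finset ℕ) (a : ℕ) (c : ℕ × ℕ) : Prop :=
  (∀ x ∈ T (c.1, c.2 - 1), x ≤ a) ∧ (∀ x ∈ T (c.1 - 1, c.2), x ≤ a) ∧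
  (a % 2 = 0 → ∀ i', i' ≠ c.1 → a ∉ T (i', c.2)) ∧
  (a % 2 = 1 → (∀ j', j' ≠ c.2 → a ∉ T (c.1, j')) ∧ c.1 ≠ c.2)

def Tog (T : ℕ × ℕ → Finset ℕ) (a : ℕ) (c : ℕ × ℕ) : Prop :=
  (∃ m ∈ T c, a < m) ∧ (a ∈ T c ∨ Addable T a c)

noncomputable def togSet (lam : List ℕ) (n : ℕ) (T : ℕ × ℕ → Finset ℕ) :
    Finset (ℕ × (ℕ × ℕ)) :=
  @Finset.filter _ (fun p => Tog T p.1 p.2) (Classical.decPred _)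
    ((Finset.Icc 1 (2 * n)) ×ˢ sCells lam [])

def toggle (T : ℕ × ℕ → Finset ℕ) (a : ℕ) (c : ℕ × ℕ) : ℕ × ℕ → Finset ℕ :=
  fun d => if d = c then (if a ∈ T c then (T c).erase a else insert a (T c)) else T d

lemma toggle_ne {T : ℕ × ℕ → Finset ℕ} {a : ℕ} {c d : ℕ × ℕ} (h : d ≠ c) :
    toggle T a c d = T d := if_neg h

lemma toggle_self (T : ℕ × ℕ → Finset ℕ) (a : ℕ) (c : ℕ × ℕ) :
    toggle T a c c = if a ∈ T c then (T c).erase a else insert a (T c) := if_pos rfl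

lemma toggle_toggle {T : ℕ × ℕ → Finset ℕ} {a : ℕ} {c : ℕ × ℕ} :
    toggle (toggle T a c) a c = T := by
  funext d
  by_cases hd : d = c
  · subst hd
    by_cases ha : a ∈ T d
    · rw [toggle_self, toggle_self, if_pos ha, if_neg (Finset.notMem_erase a _),
        Finset.insert_erase ha]
    · rw [toggle_self, toggle_self, if_neg ha, if_pos (Finset.mem_insert_self a _),
        Finset.erase_insert ha]
  · rw [toggle_ne hd, toggle_ne hd]



section Valid

variable {lam : List ℕ} {n : ℕ} {T : ℕ × ℕ → Finset ℕ} {a : ℕ} {c : ℕ × ℕ}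

lemma mem_toggle_insert (ha : a ∉ T c) {d : ℕ × ℕ} {x : ℕ} :
    x ∈ toggle T a c d ↔ (d = c ∧ x = a) ∨ x ∈ T d := by
  by_cases hd : d = c
  · subst hd; rw [toggle_self, if_neg ha]; simp [Finset.mem_insert]
  · rw [toggle_ne hd]; simp [hd]

lemma toggle_valid_erase (hT : IsSSVTP lam [] n T)
    (hc : c ∈ sCells lam []) (hm : ∃ m ∈ T c, a < m) (ha : a ∈ T c) :
    IsSSVTP lam [] n (toggle T a c) := by
  have hsub : ∀ d, toggle T a c d ⊆ T d := by
    intro d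
    by_cases hd : d = c
    · subst hd; rw [toggle_self, if_pos ha]; exact Finset.erase_subset _ _
    · rw [toggle_ne hd]
  obtain ⟨m, hmT, ham⟩ := hm
  constructor
  · constructor
    · intro d hd
      have hdc : d ≠ c := fun h => hd (h ▸ hc)
      rw [toggle_ne hdc]; exact hT.1.support d hd
    · intro d hd
      by_cases hdc : d = c
      · subst hdc
        rw [toggle_self, if_pos ha]
        exact ⟨m, Finset.mem_erase.2 ⟨by omega, hmT⟩⟩
      · rw [toggle_ne hdc]; exact hT.1.cellNonempty d hd
    · intro d x hx; exact hT.1.inRange d x (hsub d hx)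
    · intro i j h1 h2 x hx y hy
      exact hT.1.rowWeak i j h1 h2 x (hsub _ hx) y (hsub _ hy)
    · intro i j h1 h2 x hx y hy
      exact hT.1.colWeak i j h1 h2 x (hsub _ hx) y (hsub _ hy)
    · intro b hb i i' j h1 h2; exact hT.1.colOnce b hb i i' j (hsub _ h1) (hsub _ h2)
    · intro b hb i j j' h1 h2; exact hT.1.rowOnce b hb i j j' (hsub _ h1) (hsub _ h2)
  · intro i x hx; exact hT.2 i x (hsub _ hx)

lemma toggle_valid_insert (hT : IsSSVTP lam [] n T)
    (hc : c ∈ sCells lam []) (hn : 1 ≤ a ∧ a ≤ 2 * n)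
    (hm : ∃ m ∈ T c, a < m) (ha : a ∉ T c) (hadd : Addable T a c) :
    IsSSVTP lam [] n (toggle T a c) := by
  obtain ⟨m, hmT, ham⟩ := hm
  have hmem : ∀ d x, x ∈ toggle T a c d ↔ (d = c ∧ x = a) ∨ x ∈ T d :=
    fun d x => mem_toggle_insert ha
  constructor
  · constructor
    · intro d hd
      have hdc : d ≠ c := fun h => hd (h ▸ hc)
      rw [toggle_ne hdc]; exact hT.1.support d hd
    · intro d hd
      by_cases hdc : d = c
      · subst hdc; exact ⟨a, (hmem _ _).2 (Or.inl ⟨rfl, rfl⟩)⟩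
      · rw [toggle_ne hdc]; exact hT.1.cellNonempty d hd
    · intro d x hx
      rcases (hmem d x).1 hx with ⟨_, rfl⟩ | hx'
      · exact hn
      · exact hT.1.inRange d x hx'
    · -- rowWeak
      intro i j h1 h2 x hx y hy
      rcases (hmem _ x).1 hx with ⟨hcd, rfl⟩ | hx' <;>
        rcases (hmem _ y).1 hy with ⟨hcd', hyy⟩ | hy'
      · exfalso
        have := hcd.trans hcd'.symm
        simp [Prod.ext_iff] at this
      · subst hcd
        have := hT.1.rowWeak i j h1 h2 m hmT y hy'
        omega
      · subst hyy; subst hcd'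
        simpa using hadd.1 x hx'
      · exact hT.1.rowWeak i j h1 h2 x hx' y hy'
    · -- colWeak
      intro i j h1 h2 x hx y hy
      rcases (hmem _ x).1 hx with ⟨hcd, rfl⟩ | hx' <;>
        rcases (hmem _ y).1 hy with ⟨hcd', hyy⟩ | hy'
      · exfalso
        have := hcd.trans hcd'.symm
        simp [Prod.ext_iff] at this
      · subst hcd
        have := hT.1.colWeak i j h1 h2 m hmT y hy'
        omega
      · subst hyy; subst hcd'
        simpa using hadd.2.1 x hx'
      · exact hT.1.colWeak i j h1 h2 x hx' y hy'
    · -- colOnce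
      intro b hb i i' j hbi hbi'
      rcases (hmem _ b).1 hbi with ⟨hcd, hb1⟩ | h1 <;>
        rcases (hmem _ b).1 hbi' with ⟨hcd', hb2⟩ | h2
      · have := hcd.trans hcd'.symm
        exact (Prod.ext_iff.mp this).1
      · subst hb1; subst hcd
        by_contra hne
        exact hadd.2.2.1 hb i' (by simpa using fun hh => hne hh.symm) (by simpa using h2)
      · subst hb2; subst hcd'
        by_contra hne
        exact hadd.2.2.1 hb i (by simpa using hne) (by simpa using h1)
      · exact hT.1.colOnce b hb i i' j h1 h2
    · -- rowOnce
      intro b hb i j j' hbi hbi'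
      rcases (hmem _ b).1 hbi with ⟨hcd, hb1⟩ | h1 <;>
        rcases (hmem _ b).1 hbi' with ⟨hcd', hb2⟩ | h2
      · have := hcd.trans hcd'.symm
        exact (Prod.ext_iff.mp this).2
      · subst hb1; subst hcd
        by_contra hne
        exact (hadd.2.2.2 hb).1 j' (by simpa using fun hh => hne hh.symm) (by simpa using h2)
      · subst hb2; subst hcd'
        by_contra hne
        exact (hadd.2.2.2 hb).1 j (by simpa using hne) (by simpa using h1)
      · exact hT.1.rowOnce b hb i j j' h1 h2
  · -- diagonal
    intro i x hx
    rcases (hmem _ x).1 hx with ⟨hcd, rfl⟩ | hx'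
    · rcases Nat.mod_two_eq_zero_or_one x with h | h
      · exact h
      · exfalso; subst hcd; simpa using (hadd.2.2.2 h).2
    · exact hT.2 i x hx'

end Valid


section Transfer

variable {lam : List ℕ} {n : ℕ} {T : ℕ × ℕ → Finset ℕ} {a b : ℕ} {c d : ℕ × ℕ}

lemma mem_toggle_erase (ha : a ∈ T c) {d : ℕ × ℕ} {x : ℕ} :
    x ∈ toggle T a c d ↔ x ∈ T d ∧ ¬(d = c ∧ x = a) := by
  by_cases hd : d = c
  · subst hd; rw [toggle_self, if_pos ha, Finset.mem_erase]; tauto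
  · rw [toggle_ne hd]; tauto

/-- after toggling at `(a, c)`, position `(a, c)` is still togglable. -/
lemma tog_toggle_self (hT : IsSSVTP lam [] n T) (hc : c ∈ sCells lam [])
    (htog : Tog T a c) : Tog (toggle T a c) a c := by
  obtain ⟨⟨m, hmT, ham⟩, hdisj⟩ := htog
  by_cases haT : a ∈ T c
  · -- removal: show addable back
    have hc1 : 1 ≤ c.1 := (mem_sCells.1 hc).1
    have hc2 : c.1 ≤ c.2 := (mem_sCells.1 hc).2.2.1
    constructor
    · exact ⟨m, (mem_toggle_erase haT).2 ⟨hmT, by simp; omega⟩, ham⟩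
    · right
      refine ⟨?_, ?_, ?_, ?_⟩
      · intro x hx
        have hne : (c.1, c.2 - 1) ≠ c := by
          intro hh; have := congrArg Prod.snd hh; simp at this; omega
        rw [toggle_ne hne] at hx
        by_cases hmem : (c.1, c.2 - 1) ∈ sCells lam []
        · have := hT.1.rowWeak c.1 (c.2 - 1) hmem (by
            have : c.2 - 1 + 1 = c.2 := by omega
            rw [this]; exact hc) x hx a (by
            have : c.2 - 1 + 1 = c.2 := by omega
            rw [this]; exact haT)
          exact this
        · rw [hT.1.support _ hmem] at hx; simp at hx
      · intro x hx
        have hne : (c.1 - 1, c.2) ≠ c := by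
          intro hh; have := congrArg Prod.fst hh; simp at this; omega
        rw [toggle_ne hne] at hx
        by_cases hmem : (c.1 - 1, c.2) ∈ sCells lam []
        · have := hT.1.colWeak (c.1 - 1) c.2 hmem (by
            have : c.1 - 1 + 1 = c.1 := by omega
            rw [this]; exact hc) x hx a (by
            have : c.1 - 1 + 1 = c.1 := by omega
            rw [this]; exact haT)
          exact this
        · rw [hT.1.support _ hmem] at hx; simp at hx
      · intro hpar i' hi' hmem
        have hne : ((i' : ℕ), c.2) ≠ c := by
          intro hh; exact hi' (congrArg Prod.fst hh)
        rw [toggle_ne hne] at hmem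
        exact hi' (hT.1.colOnce a hpar i' c.1 c.2 hmem (by
          have : ((c.1 : ℕ), c.2) = c := rfl
          rw [this]; exact haT))
      · intro hpar
        constructor
        · intro j' hj' hmem
          have hne : ((c.1 : ℕ), j') ≠ c := by
            intro hh; exact hj' (congrArg Prod.snd hh)
          rw [toggle_ne hne] at hmem
          exact hj' (hT.1.rowOnce a hpar c.1 j' c.2 hmem (by
            have : ((c.1 : ℕ), c.2) = c := rfl
            rw [this]; exact haT))
        · intro hdiag
          have : a ∈ T (c.1, c.1) := by
            have : ((c.1 : ℕ), c.1) = c := by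
              rw [Prod.ext_iff]; exact ⟨rfl, hdiag⟩
            rw [this]; exact haT
          have := hT.2 c.1 a this
          omega
  · -- insertion
    exact ⟨⟨m, (mem_toggle_insert haT).2 (Or.inr hmT), ham⟩,
      Or.inl ((mem_toggle_insert haT).2 (Or.inl ⟨rfl, rfl⟩))⟩

/-- togglability of earlier positions transfers back. -/
lemma tog_earlier (hs : lam.Chain' (· > ·)) (hT : IsSSVTP lam [] n T)
    (hc : c ∈ sCells lam []) (hd : d ∈ sCells lam [])
    (htog : Tog T a c) (horder : a < b ∨ (b = a ∧ d ≠ c))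
    (htog' : Tog (toggle T a c) b d) : Tog T b d := by
  obtain ⟨⟨m, hmT, ham⟩, _⟩ := htog
  obtain ⟨⟨m', hm', hbm'⟩, hdisj'⟩ := htog'
  by_cases haT : a ∈ T c
  · -- removal case
    have hsub : ∀ d', toggle T a c d' ⊆ T d' := by
      intro d' x hx; exact ((mem_toggle_erase haT).1 hx).1
    have hm'd : m' ∈ T d := hsub d hm'
    refine ⟨⟨m', hm'd, hbm'⟩, ?_⟩
    rcases hdisj' with hb | hadd'
    · exact Or.inl (hsub d hb)
    by_cases hbd : b ∈ T d
    · exact Or.inl hbd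
    right
    refine ⟨?_, ?_, ?_, ?_⟩
    · -- cond1
      intro x hx
      by_cases hcell : (d.1, d.2 - 1) = c
      · by_cases hxa : x = a
        · subst hxa
          rcases horder with hlt | ⟨rfl, _⟩
          · omega
          · omega
        · exact hadd'.1 x ((mem_toggle_erase haT).2 ⟨hx, fun hh => hxa hh.2⟩)
      · exact hadd'.1 x (by rw [toggle_ne hcell]; exact hx)
    · -- cond2
      intro x hx
      by_cases hcell : ((d.1 : ℕ) - 1, d.2) = c
      · by_cases hxa : x = a
        · subst hxa
          rcases horder with hlt | ⟨rfl, _⟩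
          · omega
          · omega
        · exact hadd'.2.1 x ((mem_toggle_erase haT).2 ⟨hx, fun hh => hxa hh.2⟩)
      · exact hadd'.2.1 x (by rw [toggle_ne hcell]; exact hx)
    · -- cond3
      intro hpar i' hi' hmem
      by_cases hcell : ((i' : ℕ), d.2) = c
      · -- b in cell c removed... b = a? or b ≠ a?
        by_cases hba : b = a
        · -- chain contradiction
          subst hba
          exfalso
          have haC : b ∈ T (i', d.2) := by rw [hcell]; exact haT
          have hcC : ((i' : ℕ), d.2) ∈ sCells lam [] := by rw [hcell]; exact hc
          have hdC : ((d.1 : ℕ), d.2) ∈ sCells lam [] := by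
            rw [show ((d.1 : ℕ), d.2) = d from rfl]; exact hd
          rcases Nat.lt_or_ge i' d.1 with hlt | hge
          · -- i' < d.1 : use cond2 of hadd'
            have hprev : ((d.1 : ℕ) - 1, d.2) ∈ sCells lam [] :=
              col_interval hs hcC hdC (by omega) (by omega)
            by_cases heq : (d.1 : ℕ) - 1 = i'
            · have hmm : m ∈ toggle T b c ((d.1 : ℕ) - 1, d.2) := by
                rw [heq, hcell]
                exact (mem_toggle_erase haT).2 ⟨hmT, by simp; omega⟩
              have := hadd'.2.1 m hmm
              omega
            · obtain ⟨z, hz⟩ := hT.1.cellNonempty _ hprev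
              have hch : m ≤ z := by
                refine col_chain hs hT.1 (by rw [hcell]; exact hc) hprev (by omega) ?_ hz
                rw [hcell]; exact hmT
              have hne : ((d.1 : ℕ) - 1, d.2) ≠ c := by
                rw [← hcell]; intro hh
                exact heq (congrArg Prod.fst hh)
              have := hadd'.2.1 z (by rw [toggle_ne hne]; exact hz)
              omega
          · -- d.1 < i'
            have hlt2 : d.1 < i' := by omega
            have := col_chain hs hT.1 hdC hcC hlt2 hm'd haC
            omega
        · -- b ≠ a, so b survived in toggle
          exact hadd'.2.2.1 hpar i' hi'
            ((mem_toggle_erase haT).2 ⟨hmem, fun hh => hba hh.2⟩)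
      · exact hadd'.2.2.1 hpar i' hi' (by rw [toggle_ne hcell]; exact hmem)
    · -- cond4
      intro hpar
      refine ⟨?_, (hadd'.2.2.2 hpar).2⟩
      intro j' hj' hmem
      by_cases hcell : ((d.1 : ℕ), j') = c
      · by_cases hba : b = a
        · subst hba
          exfalso
          have haC : b ∈ T (d.1, j') := by rw [hcell]; exact haT
          have hcC : ((d.1 : ℕ), j') ∈ sCells lam [] := by rw [hcell]; exact hc
          have hdC : ((d.1 : ℕ), d.2) ∈ sCells lam [] := by
            rw [show ((d.1 : ℕ), d.2) = d from rfl]; exact hd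
          rcases Nat.lt_or_ge j' d.2 with hlt | hge
          · have hprev : ((d.1 : ℕ), d.2 - 1) ∈ sCells lam [] :=
              row_interval hcC hdC (by omega) (by omega)
            by_cases heq : (d.2 : ℕ) - 1 = j'
            · have hmm : m ∈ toggle T b c ((d.1 : ℕ), d.2 - 1) := by
                rw [heq, hcell]
                exact (mem_toggle_erase haT).2 ⟨hmT, by simp; omega⟩
              have := hadd'.1 m hmm
              omega
            · obtain ⟨z, hz⟩ := hT.1.cellNonempty _ hprev
              have hch : m ≤ z := by
                refine row_chain hT.1 (by rw [hcell]; exact hc) hprev (by omega) ?_ hz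
                rw [hcell]; exact hmT
              have hne : ((d.1 : ℕ), d.2 - 1) ≠ c := by
                rw [← hcell]; intro hh
                exact heq (congrArg Prod.snd hh)
              have := hadd'.1 z (by rw [toggle_ne hne]; exact hz)
              omega
          · have hlt2 : d.2 < j' := by omega
            have := row_chain hT.1 hdC hcC hlt2 hm'd haC
            omega
        · exact (hadd'.2.2.2 hpar).1 j' hj'
            ((mem_toggle_erase haT).2 ⟨hmem, fun hh => hba hh.2⟩)
      · exact (hadd'.2.2.2 hpar).1 j' hj' (by rw [toggle_ne hcell]; exact hmem)
  · -- insertion case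
    have hsup : ∀ d' x, x ∈ T d' → x ∈ toggle T a c d' :=
      fun d' x hx => (mem_toggle_insert haT).2 (Or.inr hx)
    have hm'd : m' ∈ T d := by
      rcases (mem_toggle_insert haT).1 hm' with ⟨hdc, hma⟩ | h
      · rcases horder with hlt | ⟨heqq, hne⟩
        · omega
        · exact absurd hdc hne
      · exact h
    refine ⟨⟨m', hm'd, hbm'⟩, ?_⟩
    rcases hdisj' with hb | hadd'
    · rcases (mem_toggle_insert haT).1 hb with ⟨hdc, hba⟩ | hbT
      · rcases horder with hlt | ⟨heqq, hne⟩
        · omega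
        · exact absurd hdc hne
      · exact Or.inl hbT
    right
    refine ⟨fun x hx => hadd'.1 x (hsup _ x hx),
      fun x hx => hadd'.2.1 x (hsup _ x hx), ?_, ?_⟩
    · intro hpar i' hi' hmem
      exact hadd'.2.2.1 hpar i' hi' (hsup _ b hmem)
    · intro hpar
      refine ⟨?_, (hadd'.2.2.2 hpar).2⟩
      intro j' hj' hmem
      exact (hadd'.2.2.2 hpar).1 j' hj' (hsup _ b hmem)

end Transfer


section Pick

variable (lam : List ℕ) (n : ℕ)

def NN : ℕ := lam.length + lam.foldr max 0 + 1

def prio (p : ℕ × (ℕ × ℕ)) : ℕ :=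
  (NN lam * NN lam) * (2 * n - p.1) + (NN lam * p.2.1 + p.2.2)

variable {lam n}

lemma dom_bounds {p : ℕ × (ℕ × ℕ)} (hp : p ∈ (Finset.Icc 1 (2*n)) ×ˢ sCells lam []) :
    1 ≤ p.1 ∧ p.1 ≤ 2*n ∧ p.2.1 < NN lam ∧ p.2.2 < NN lam := by
  rw [Finset.mem_product, Finset.mem_Icc] at hp
  obtain ⟨⟨h1, h2⟩, hc⟩ := hp
  rw [mem_sCells] at hc
  have := getD_le_foldr lam (p.2.1 - 1)
  refine ⟨h1, h2, ?_, ?_⟩ <;> simp only [NN] <;> omega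

lemma prio_inj {p q : ℕ × (ℕ × ℕ)}
    (hp : p ∈ (Finset.Icc 1 (2*n)) ×ˢ sCells lam [])
    (hq : q ∈ (Finset.Icc 1 (2*n)) ×ˢ sCells lam [])
    (heq : prio lam n p = prio lam n q) : p = q := by
  obtain ⟨p1, p2, p3, p4⟩ := dom_bounds hp
  obtain ⟨q1, q2, q3, q4⟩ := dom_bounds hq
  have hN : 0 < NN lam := by simp [NN]
  have hBp : NN lam * p.2.1 + p.2.2 < NN lam * NN lam := by
    calc NN lam * p.2.1 + p.2.2 < NN lam * p.2.1 + NN lam := by omega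
    _ = NN lam * (p.2.1 + 1) := by ring
    _ ≤ NN lam * NN lam := Nat.mul_le_mul_left _ (by omega)
  have hBq : NN lam * q.2.1 + q.2.2 < NN lam * NN lam := by
    calc NN lam * q.2.1 + q.2.2 < NN lam * q.2.1 + NN lam := by omega
    _ = NN lam * (q.2.1 + 1) := by ring
    _ ≤ NN lam * NN lam := Nat.mul_le_mul_left _ (by omega)
  have hd : (2*n - p.1) = (2*n - q.1) := by
    have h1 := congrArg (· / (NN lam * NN lam)) heq
    simpa [prio, Nat.mul_add_div (by positivity : 0 < NN lam * NN lam),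
      Nat.div_eq_of_lt hBp, Nat.div_eq_of_lt hBq] using h1
  have h1 : p.1 = q.1 := by omega
  have hmod : NN lam * p.2.1 + p.2.2 = NN lam * q.2.1 + q.2.2 := by
    have h2 := congrArg (· % (NN lam * NN lam)) heq
    simpa [prio, Nat.mul_add_mod, Nat.mod_eq_of_lt hBp, Nat.mod_eq_of_lt hBq] using h2
  have h21 : p.2.1 = q.2.1 := by
    have h3 := congrArg (· / NN lam) hmod
    simpa [Nat.mul_add_div hN, Nat.div_eq_of_lt p4, Nat.div_eq_of_lt q4] using h3
  have h22 : p.2.2 = q.2.2 := by rw [h21] at hmod; omega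
  exact Prod.ext h1 (Prod.ext h21 h22)

lemma prio_lt_fst {p q : ℕ × (ℕ × ℕ)}
    (hp : p ∈ (Finset.Icc 1 (2*n)) ×ˢ sCells lam [])
    (hq : q ∈ (Finset.Icc 1 (2*n)) ×ˢ sCells lam [])
    (hlt : prio lam n q < prio lam n p) : p.1 ≤ q.1 := by
  obtain ⟨p1, p2, p3, p4⟩ := dom_bounds hp
  obtain ⟨q1, q2, q3, q4⟩ := dom_bounds hq
  by_contra hcon
  have h1 : 2*n - p.1 + 1 ≤ 2*n - q.1 := by omega
  have hBp : NN lam * p.2.1 + p.2.2 < NN lam * NN lam := by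
    calc NN lam * p.2.1 + p.2.2 < NN lam * p.2.1 + NN lam := by omega
    _ = NN lam * (p.2.1 + 1) := by ring
    _ ≤ NN lam * NN lam := Nat.mul_le_mul_left _ (by omega)
  have h2 : (NN lam * NN lam) * (2*n - p.1) + (NN lam * NN lam)
      ≤ (NN lam * NN lam) * (2*n - q.1) := by
    calc (NN lam * NN lam) * (2*n - p.1) + (NN lam * NN lam)
        = (NN lam * NN lam) * (2*n - p.1 + 1) := by ring
    _ ≤ (NN lam * NN lam) * (2*n - q.1) := Nat.mul_le_mul_left _ h1
  have hlt' : NN lam * NN lam * (2 * n - q.1) + (NN lam * q.2.1 + q.2.2) <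
      NN lam * NN lam * (2 * n - p.1) + (NN lam * p.2.1 + p.2.2) := hlt
  omega

variable (lam n)

noncomputable def pick (T : ℕ × ℕ → Finset ℕ) : ℕ × (ℕ × ℕ) :=
  if h : (togSet lam n T).Nonempty then
    (Finset.exists_min_image (togSet lam n T) (prio lam n) h).choose
  else (0, (0, 0))

lemma pick_spec {T : ℕ × ℕ → Finset ℕ} (h : (togSet lam n T).Nonempty) :
    pick lam n T ∈ togSet lam n T ∧
      ∀ q ∈ togSet lam n T, prio lam n (pick lam n T) ≤ prio lam n q := by
  rw [pick, dif_pos h]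
  have := (Finset.exists_min_image (togSet lam n T) (prio lam n) h).choose_spec
  exact ⟨this.1, this.2⟩

noncomputable def iota (T : ℕ × ℕ → Finset ℕ) : ℕ × ℕ → Finset ℕ :=
  if h : (togSet lam n T).Nonempty then
    toggle T (pick lam n T).1 (pick lam n T).2
  else T

variable {lam n}

lemma mem_togSet {T : ℕ × ℕ → Finset ℕ} {p : ℕ × (ℕ × ℕ)} :
    p ∈ togSet lam n T ↔ (1 ≤ p.1 ∧ p.1 ≤ 2*n) ∧ p.2 ∈ sCells lam [] ∧
      Tog T p.1 p.2 := by
  classical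
  unfold togSet
  rw [Finset.mem_filter, Finset.mem_product, Finset.mem_Icc]
  tauto

lemma iota_main (hs : lam.Chain' (· > ·)) {T : ℕ × ℕ → Finset ℕ}
    (hT : IsSSVTP lam [] n T) (hne : (togSet lam n T).Nonempty) :
    IsSSVTP lam [] n (iota lam n T) ∧ iota lam n (iota lam n T) = T ∧
      iota lam n T ≠ T ∧ (togSet lam n (iota lam n T)).Nonempty := by
  obtain ⟨hp, hmin⟩ := pick_spec lam n hne
  set p := pick lam n T with hpdef
  have hiota : iota lam n T = toggle T p.1 p.2 := dif_pos hne
  obtain ⟨hrange, hcell, htog⟩ := mem_togSet.1 hp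
  have hvalid : IsSSVTP lam [] n (toggle T p.1 p.2) := by
    by_cases hmem : p.1 ∈ T p.2
    · exact toggle_valid_erase hT hcell htog.1 hmem
    · rcases htog.2 with hin | hadd
      · exact absurd hin hmem
      · exact toggle_valid_insert hT hcell hrange htog.1 hmem hadd
  have htog' : Tog (toggle T p.1 p.2) p.1 p.2 := tog_toggle_self hT hcell htog
  have hp' : p ∈ togSet lam n (toggle T p.1 p.2) :=
    mem_togSet.2 ⟨hrange, hcell, htog'⟩
  have hne' : (togSet lam n (toggle T p.1 p.2)).Nonempty := ⟨p, hp'⟩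
  have hpdom : p ∈ (Finset.Icc 1 (2*n)) ×ˢ sCells lam [] := by
    rw [Finset.mem_product, Finset.mem_Icc]; exact ⟨hrange, hcell⟩
  -- pick of the toggled tableau is again p
  have hpick' : pick lam n (toggle T p.1 p.2) = p := by
    obtain ⟨hq, hqmin⟩ := pick_spec lam n hne'
    set q := pick lam n (toggle T p.1 p.2) with hqdef
    obtain ⟨hqrange, hqcell, hqtog⟩ := mem_togSet.1 hq
    have hqdom : q ∈ (Finset.Icc 1 (2*n)) ×ˢ sCells lam [] := by
      rw [Finset.mem_product, Finset.mem_Icc]; exact ⟨hqrange, hqcell⟩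
    have hle : prio lam n q ≤ prio lam n p := hqmin p hp'
    rcases eq_or_lt_of_le hle with heq | hlt
    · exact prio_inj hqdom hpdom heq
    · exfalso
      have hfst : p.1 ≤ q.1 := prio_lt_fst hpdom hqdom hlt
      have horder : p.1 < q.1 ∨ (q.1 = p.1 ∧ q.2 ≠ p.2) := by
        rcases eq_or_lt_of_le hfst with heq1 | hlt1
        · right
          refine ⟨heq1.symm, fun h2 => ?_⟩
          have : q = p := Prod.ext heq1.symm h2
          rw [this] at hlt; omega
        · left; exact hlt1
      have := tog_earlier hs hT hcell hqcell htog horder hqtog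
      have hqT : q ∈ togSet lam n T := mem_togSet.2 ⟨hqrange, hqcell, this⟩
      have := hmin q hqT
      omega
  refine ⟨?_, ?_, ?_, ?_⟩
  · rw [hiota]; exact hvalid
  · rw [hiota]
    have hstep : iota lam n (toggle T p.1 p.2) =
        toggle (toggle T p.1 p.2) (pick lam n (toggle T p.1 p.2)).1
          (pick lam n (toggle T p.1 p.2)).2 := dif_pos hne'
    rw [hstep, hpick']
    exact toggle_toggle
  · rw [hiota]
    intro hco
    have := congrFun hco p.2
    rw [toggle_self] at this
    by_cases hmem : p.1 ∈ T p.2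
    · rw [if_pos hmem] at this
      exact (Finset.erase_eq_self.1 this) hmem
    · rw [if_neg hmem] at this
      exact hmem (Finset.insert_eq_self.1 this)
  · rw [hiota]; exact hne'

end Pick


section Min

variable {lam : List ℕ} {n : ℕ}

lemma TminP_mem_iff {c : ℕ × ℕ} {x : ℕ} :
    x ∈ TminP lam c ↔ c ∈ sCells lam [] ∧ x = 2 * c.1 := by
  rw [TminP]
  by_cases hc : c ∈ sCells lam []
  · rw [if_pos hc]; simp [hc]
  · rw [if_neg hc]; simp [hc]

lemma TminP_valid (h : IsStrictPartition lam) (hn : lam.length ≤ n) :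
    IsSSVTP lam [] n (TminP lam) := by
  constructor
  · constructor
    · intro c hc; rw [TminP, if_neg hc]
    · intro c hc; exact ⟨2 * c.1, TminP_mem_iff.2 ⟨hc, rfl⟩⟩
    · intro c x hx
      obtain ⟨hc, rfl⟩ := TminP_mem_iff.1 hx
      obtain ⟨h1, h2, -, -⟩ := mem_sCells.1 hc
      omega
    · intro i j h1 h2 x hx y hy
      obtain ⟨-, rfl⟩ := TminP_mem_iff.1 hx
      obtain ⟨-, rfl⟩ := TminP_mem_iff.1 hy
      omega
    · intro i j h1 h2 x hx y hy
      obtain ⟨-, rfl⟩ := TminP_mem_iff.1 hx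
      obtain ⟨-, rfl⟩ := TminP_mem_iff.1 hy
      omega
    · intro a _ i i' j hx hy
      obtain ⟨-, h1⟩ := TminP_mem_iff.1 hx
      obtain ⟨-, h2⟩ := TminP_mem_iff.1 hy
      simp at h1 h2; omega
    · intro a ha i j j' hx hy
      obtain ⟨-, h1⟩ := TminP_mem_iff.1 hx
      simp at h1; omega
  · intro i x hx
    obtain ⟨-, rfl⟩ := TminP_mem_iff.1 hx
    omega

/-- the cell above a diagonal cell is in the diagram (needs strictness). -/
lemma above_diag_mem (hs : lam.Chain' (· > ·)) {i : ℕ} (hi : 2 ≤ i)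
    (hc : ((i : ℕ), i) ∈ sCells lam []) : ((i : ℕ) - 1, i) ∈ sCells lam [] := by
  obtain ⟨h1, h2, h3, h4⟩ := mem_sCells.1 hc
  simp only at *
  have haux := getD_add_le hs 1 (i - 2) (by omega)
  have hrw : i - 2 + 1 = i - 1 := by omega
  rw [hrw] at haux
  rw [mem_sCells]
  simp only
  have : i - 1 - 1 = i - 2 := by omega
  rw [this]
  omega

/-- the cell above any non-first-row cell is in the diagram. -/
lemma above_mem (hs : lam.Chain' (· > ·)) {i j : ℕ} (hi : 2 ≤ i)
    (hc : ((i : ℕ), j) ∈ sCells lam []) : ((i : ℕ) - 1, j) ∈ sCells lam [] := by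
  obtain ⟨h1, h2, h3, h4⟩ := mem_sCells.1 hc
  simp only at *
  have haux := getD_add_le hs 1 (i - 2) (by omega)
  have hrw : i - 2 + 1 = i - 1 := by omega
  rw [hrw] at haux
  rw [mem_sCells]
  simp only
  have hrw2 : i - 1 - 1 = i - 2 := by omega
  rw [hrw2]
  omega

lemma togSet_TminP (h : IsStrictPartition lam) (hn : lam.length ≤ n) :
    togSet lam n (TminP lam) = ∅ := by
  rw [Finset.eq_empty_iff_forall_notMem]
  intro p hp
  obtain ⟨a, i, j⟩ := p
  obtain ⟨hrange, hcell, htog⟩ := mem_togSet.1 hp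
  obtain ⟨⟨m, hm, ham⟩, hdisj⟩ := htog
  obtain ⟨hcC, rfl⟩ := TminP_mem_iff.1 hm
  simp only at hrange hcell hdisj ham hm ⊢
  obtain ⟨h1, h2, h3, h4⟩ := mem_sCells.1 hcell
  simp only at h1 h2 h3 h4
  rcases hdisj with hin | hadd
  · obtain ⟨-, h5⟩ := TminP_mem_iff.1 hin
    simp only at h5
    omega
  rcases Nat.lt_or_ge i j with hij | hij
  · -- j > i : left neighbour kills it
    have hleft : ((i : ℕ), j - 1) ∈ sCells lam [] := by
      rw [mem_sCells]; simp only; omega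
    have hx : 2 * i ∈ TminP lam (i, j - 1) := TminP_mem_iff.2 ⟨hleft, rfl⟩
    have hfin := hadd.1 (2 * i) (by simp only; exact hx)
    omega
  · -- j = i (diagonal)
    have hji : j = i := by omega
    rcases Nat.lt_or_ge i 2 with hi1 | hi2
    · -- i = 1 : a = 1 is odd
      have ha1 : a = 1 := by omega
      rcases Nat.mod_two_eq_zero_or_one a with hpar | hpar
      · omega
      · exact (hadd.2.2.2 hpar).2 (by omega)
    · -- i ≥ 2
      have habove : ((i : ℕ) - 1, j) ∈ sCells lam [] := by
        rw [hji] at hcell ⊢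
        exact above_diag_mem h.1 hi2 hcell
      have hx : 2 * (i - 1) ∈ TminP lam (i - 1, j) := by
        refine TminP_mem_iff.2 ⟨habove, rfl⟩
      have hup := hadd.2.1 (2 * (i - 1)) hx
      rcases Nat.mod_two_eq_zero_or_one a with hpar | hpar
      · -- a even, a = 2(i-1)
        have ha2 : a = 2 * (i - 1) := by omega
        exact hadd.2.2.1 hpar (i - 1) (by omega) (ha2 ▸ hx)
      · -- a odd: diagonal
        exact (hadd.2.2.2 hpar).2 (by omega)

lemma fixed_eq_TminP (h : IsStrictPartition lam) (hn : lam.length ≤ n)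
    {T : ℕ × ℕ → Finset ℕ} (hT : IsSSVTP lam [] n T)
    (hempty : togSet lam n T = ∅) : T = TminP lam := by
  have hno : ∀ a (c : ℕ × ℕ), 1 ≤ a → a ≤ 2*n → c ∈ sCells lam [] →
      ¬ Tog T a c := by
    intro a c ha1 ha2 hc htog
    have : (a, c) ∈ togSet lam n T := mem_togSet.2 ⟨⟨ha1, ha2⟩, hc, htog⟩
    rw [hempty] at this; exact absurd this (Finset.notMem_empty _)
  -- every cell is a singleton
  have hsing : ∀ c ∈ sCells lam [], ∀ x ∈ T c, ∀ y ∈ T c, x = y := by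
    intro c hc x hx y hy
    by_contra hne
    rcases Nat.lt_or_ge x y with hlt | hge
    · have hx1 := hT.1.inRange c x hx
      exact hno x c hx1.1 hx1.2 hc ⟨⟨y, hy, hlt⟩, Or.inl hx⟩
    · have hy1 := hT.1.inRange c y hy
      exact hno y c hy1.1 hy1.2 hc ⟨⟨x, hx, by omega⟩, Or.inl hy⟩
  have key : ∀ k (c : ℕ × ℕ), c ∈ sCells lam [] → c.1 + c.2 ≤ k →
      T c = {2 * c.1} := by
    intro k
    induction k with
    | zero =>
      intro c hc hk
      obtain ⟨h1, -, -, -⟩ := mem_sCells.1 hc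
      omega
    | succ k ih =>
      intro c hc hk
      rcases Nat.lt_or_ge (c.1 + c.2) (k+1) with hlt | hge
      · exact ih c hc (by omega)
      obtain ⟨m, hm⟩ := hT.1.cellNonempty c hc
      have hTc : T c = {m} :=
        Finset.eq_singleton_iff_unique_mem.2 ⟨hm, fun x hx => hsing c hc x hx m hm⟩
      obtain ⟨h1, h2, h3, h4⟩ := mem_sCells.1 hc
      obtain ⟨i, j⟩ := c
      simp only at h1 h2 h3 h4 hge hk
      have hmr := hT.1.inRange (i, j) m hm
      -- lower bound : 2 * i ≤ m
      have hlow : 2 * i ≤ m := by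
        rcases Nat.lt_or_ge i j with hij | hij
        · -- left neighbour
          have hleft : ((i : ℕ), j - 1) ∈ sCells lam [] := by
            rw [mem_sCells]; simp only; omega
          have hLval : T (i, j - 1) = {2 * i} := ih (i, j-1) hleft (by simp only; omega)
          have := hT.1.rowWeak i (j-1) hleft (by
            have : j - 1 + 1 = j := by omega
            rw [this]; exact hc) (2*i) (by rw [hLval]; simp) m (by
            have : j - 1 + 1 = j := by omega
            rw [this]; exact hm)
          omega
        · have hji : j = i := by omega
          have hc2 := hc
          have hm2 := hm
          rw [hji] at hc2 hm2
          have heven := hT.2 i m hm2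
          rcases Nat.lt_or_ge i 2 with hi1 | hi2
          · omega
          · have habove : ((i : ℕ) - 1, i) ∈ sCells lam [] :=
              above_diag_mem h.1 hi2 hc2
            have hAval : T (i - 1, i) = {2 * (i-1)} :=
              ih (i-1, i) habove (by simp only; omega)
            have hcw := hT.1.colWeak (i-1) i habove (by
              have hr : i - 1 + 1 = i := by omega
              rw [hr]; exact hc2) (2*(i-1)) (by rw [hAval]; simp) m (by
              have hr : i - 1 + 1 = i := by omega
              rw [hr]; exact hm2)
            -- m ≠ 2*(i-1) by colOnce
            by_cases hEq : m = 2 * (i - 1)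
            · exfalso
              have := hT.1.colOnce m (by omega) (i-1) i i
                (by rw [hAval, hEq]; simp) hm2
              omega
            · omega
      -- upper bound : m ≤ 2 * i
      by_cases hup : m ≤ 2 * i
      · have : m = 2 * i := by omega
        rw [hTc, this]
      exfalso
      push_neg at hup
      refine hno (2*i) (i, j) (by omega) (by omega) hc ⟨⟨m, hm, hup⟩, Or.inr ?_⟩
      refine ⟨?_, ?_, ?_, ?_⟩
      · -- left
        intro x hx
        simp only at hx
        rcases Nat.lt_or_ge i j with hij | hij
        · have hleft : ((i : ℕ), j - 1) ∈ sCells lam [] := by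
            rw [mem_sCells]; simp only; omega
          have hLval : T (i, j - 1) = {2 * i} := ih (i, j-1) hleft (by simp only; omega)
          rw [hLval] at hx
          simp at hx
          omega
        · have : ((i:ℕ), j - 1) ∉ sCells lam [] := by
            rw [mem_sCells]; simp only; omega
          rw [hT.1.support _ this] at hx
          simp at hx
      · -- above
        intro x hx
        simp only at hx
        rcases Nat.lt_or_ge i 2 with hi1 | hi2
        · have : ((i:ℕ) - 1, j) ∉ sCells lam [] := by
            rw [mem_sCells]; simp only; omega
          rw [hT.1.support _ this] at hx
          simp at hx
        · have habove : ((i : ℕ) - 1, j) ∈ sCells lam [] := above_mem h.1 hi2 hc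
          have hAval : T (i - 1, j) = {2 * (i-1)} :=
            ih (i-1, j) habove (by simp only; omega)
          rw [hAval] at hx
          simp at hx
          omega
      · -- column once
        intro hpar i' hi' hmem
        simp only at hi' hmem
        by_cases hcol : ((i' : ℕ), j) ∈ sCells lam []
        · rcases Nat.lt_or_ge i' i with hlt2 | hge2
          · have := ih (i', j) hcol (by simp only; omega)
            rw [this] at hmem
            simp at hmem
            omega
          · have hgt2 : i < i' := by omega
            have := col_chain h.1 hT.1 hc hcol hgt2 hm hmem
            omega
        · rw [hT.1.support _ hcol] at hmem
          simp at hmem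
      · intro hpar; omega
  funext c
  by_cases hcC : c ∈ sCells lam []
  · rw [key (c.1 + c.2) c hcC le_rfl, TminP, if_pos hcC]
  · rw [hT.1.support c hcC, TminP, if_neg hcC]

end Min


section Count

lemma ssvtP_finite (lam : List ℕ) (n : ℕ) :
    {T : ℕ × ℕ → Finset ℕ | IsSSVTP lam [] n T}.Finite := by
  have : Finite ↥{T : ℕ × ℕ → Finset ℕ | IsSSVTP lam [] n T} := by
    let f : ↥{T : ℕ × ℕ → Finset ℕ | IsSSVTP lam [] n T} →
        (↥(sCells lam []) → ↥((Finset.Icc 1 (2*n)).powerset)) :=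
      fun T c => ⟨T.1 c.1, Finset.mem_powerset.2 (fun x hx =>
        Finset.mem_Icc.2 (T.2.1.inRange c.1 x hx))⟩
    have hf : Function.Injective f := by
      intro T1 T2 hfeq
      apply Subtype.ext
      funext d
      by_cases hd : d ∈ sCells lam []
      · have := congrFun hfeq ⟨d, hd⟩
        simpa [f, Subtype.ext_iff] using this
      · rw [T1.2.1.support d hd, T2.2.1.support d hd]
    exact Finite.of_injective f hf
  exact Set.toFinite _

lemma even_card_invol {α : Type*} [DecidableEq α] (s : Finset α) (f : α → α)
    (hmem : ∀ a ∈ s, f a ∈ s) (hinv : ∀ a ∈ s, f (f a) = a)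
    (hne : ∀ a ∈ s, f a ≠ a) : Even s.card := by
  have h0 : (∑ _x ∈ s, (1 : ZMod 2)) = 0 :=
    Finset.sum_involution (fun a _ => f a) (fun a ha => by decide)
      (fun a ha _ => hne a ha) hmem (fun a ha => hinv a ha)
  rw [Finset.sum_const, nsmul_eq_mul, mul_one] at h0
  have := (ZMod.natCast_eq_zero_iff s.card 2).1 h0
  exact even_iff_two_dvd.2 this

end Count

theorem main_odd (lam : List ℕ) (n : ℕ)
    (h : IsStrictPartition lam) (hn : lam.length ≤ n) :
    Odd {T : ℕ × ℕ → Finset ℕ | IsSSVTP lam [] n T}.ncard := by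
  classical
  have hfin := ssvtP_finite lam n
  have hcard : {T : ℕ × ℕ → Finset ℕ | IsSSVTP lam [] n T}.ncard
      = hfin.toFinset.card := Set.ncard_eq_toFinset_card _ hfin
  set s := hfin.toFinset with hsdef
  have hmem_s : ∀ T, T ∈ s ↔ IsSSVTP lam [] n T := by
    intro T; rw [hsdef, Set.Finite.mem_toFinset]; rfl
  have htp : TminP lam ∈ s := (hmem_s _).2 (TminP_valid h hn)
  have hsplit : s.card = (s.erase (TminP lam)).card + 1 :=
    (Finset.card_erase_add_one htp).symm
  have heven : Even (s.erase (TminP lam)).card := by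
    apply even_card_invol _ (iota lam n)
    · intro T hT
      rw [Finset.mem_erase] at hT ⊢
      obtain ⟨hTne, hTs⟩ := hT
      have hTP := (hmem_s T).1 hTs
      have hne : (togSet lam n T).Nonempty := by
        rw [Finset.nonempty_iff_ne_empty]
        intro hemp
        exact hTne (fixed_eq_TminP h hn hTP hemp)
      obtain ⟨hvalid, hinv2, hneq, hne'⟩ := iota_main h.1 hTP hne
      refine ⟨?_, (hmem_s _).2 hvalid⟩
      intro heq
      rw [heq, togSet_TminP h hn] at hne'
      exact absurd hne' (by simp)
    · intro T hT
      rw [Finset.mem_erase] at hT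
      obtain ⟨hTne, hTs⟩ := hT
      have hTP := (hmem_s T).1 hTs
      have hne : (togSet lam n T).Nonempty := by
        rw [Finset.nonempty_iff_ne_empty]
        intro hemp
        exact hTne (fixed_eq_TminP h hn hTP hemp)
      exact (iota_main h.1 hTP hne).2.1
    · intro T hT
      rw [Finset.mem_erase] at hT
      obtain ⟨hTne, hTs⟩ := hT
      have hTP := (hmem_s T).1 hTs
      have hne : (togSet lam n T).Nonempty := by
        rw [Finset.nonempty_iff_ne_empty]
        intro hemp
        exact hTne (fixed_eq_TminP h hn hTP hemp)
      exact (iota_main h.1 hTP hne).2.2.1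
  rw [hcard, hsplit]
  exact heven.add_one

end SSVTodd

/-- the number of shifted set-valued semistandard tableaux of
P-type of shape `λ` in `n` letters is odd. -/
theorem ssvtP_card_odd (lam : List ℕ) (n : ℕ)
    (h : IsStrictPartition lam) (hn : lam.length ≤ n) :
    Odd {T : ℕ × ℕ → Finset ℕ | IsSSVTP lam [] n T}.ncard :=
  SSVTodd.main_odd lam n h hn
end

section
/- For any strict partition λ and any n ≥ ℓ(λ), the number of shifted set-valued semistandard tableaux of shape λ with entries from {1' < 1 < ... < n' < n} (without the diagonal restriction, i.e., the Q-condition tableaux) is odd. -/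
open Finset

section SSVTQAux

/-! ### Auxiliary machinery for `ssvtQ_card_odd` -/

lemma getD_le_foldr_max (l : List ℕ) (k : ℕ) : l.getD k 0 ≤ l.foldr max 0 := by
  induction l generalizing k with
  | nil => simp
  | cons a t ih =>
    cases k with
    | zero => simp [List.getD]
    | succ k => simpa [List.getD] using le_trans (ih k) (le_max_right _ _)

lemma mem_sCells {lam : List ℕ} {i j : ℕ} :
    (i, j) ∈ sCells lam [] ↔ 1 ≤ i ∧ i ≤ lam.length ∧ i ≤ j ∧
      j ≤ lam.getD (i - 1) 0 + i - 1 := by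
  simp only [sCells, Finset.mem_filter, Finset.mem_product, Finset.mem_range]
  constructor
  · rintro ⟨-, h1, h2, h3, h4⟩
    exact ⟨h1, h2, by simpa using h3, h4⟩
  · rintro ⟨h1, h2, h3, h4⟩
    have := getD_le_foldr_max lam (i - 1)
    exact ⟨⟨by omega, by omega⟩, h1, h2, by simpa using h3, h4⟩

lemma getD_rep (d : ℕ) (l : List ℕ) (k : ℕ) :
    (List.replicate d 0 ++ l).getD k 0 = if k < d then 0 else l.getD (k - d) 0 := by
  split
  · rw [List.getD_append _ _ _ _ (by simpa using ‹k < d›)]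
    simp [List.getD_eq_getElem?_getD]
  · rw [List.getD_append_right _ _ _ _ (by simpa using Nat.le_of_not_lt ‹¬ k < d›)]
    simp

lemma chain'_getD_lt {L : List ℕ} (hc : L.Chain' (· > ·)) {k : ℕ} (h : k + 1 < L.length) :
    L.getD (k+1) 0 < L.getD k 0 := by
  rw [L.getD_eq_getElem 0 h, L.getD_eq_getElem 0 (by omega)]
  exact List.isChain_iff_getElem.mp hc k (by omega)

lemma even_card_of_involution {α : Type*} [DecidableEq α] (u : Finset α) (f : α → α)
    (h : ∀ x ∈ u, f x ∈ u ∧ f (f x) = x ∧ f x ≠ x) : Even u.card := by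
  induction u using Finset.strongInduction with
  | _ u ih =>
    rcases u.eq_empty_or_nonempty with rfl | ⟨x, hx⟩
    · simp
    · obtain ⟨hfx, hffx, hne⟩ := h x hx
      set u' := (u.erase x).erase (f x) with hu'
      have hss : u' ⊂ u := by
        refine Finset.ssubset_iff_of_subset ?_ |>.mpr ⟨x, hx, by simp [hu', hne.symm]⟩
        intro y hy
        exact Finset.mem_of_mem_erase (Finset.mem_of_mem_erase hy)
      have hcard : u.card = u'.card + 2 := by
        have c1 : 0 < u.card := Finset.card_pos.mpr ⟨x, hx⟩
        have c2 : 0 < (u.erase x).card :=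
          Finset.card_pos.mpr ⟨f x, Finset.mem_erase.mpr ⟨hne, hfx⟩⟩
        have c3 : (u.erase x).card = u.card - 1 := Finset.card_erase_of_mem hx
        rw [hu', Finset.card_erase_of_mem, c3]
        · omega
        · exact Finset.mem_erase.mpr ⟨hne, hfx⟩
      have he : Even u'.card := by
        refine ih u' hss (fun y hy => ?_)
        have hyu : y ∈ u := Finset.mem_of_mem_erase (Finset.mem_of_mem_erase hy)
        obtain ⟨h1, h2, h3⟩ := h y hyu
        have hy1 : y ≠ x := by rintro rfl; simp [hu'] at hy
        have hy2 : y ≠ f x := by rintro rfl; simp [hu'] at hy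
        refine ⟨Finset.mem_erase.mpr ⟨?_, Finset.mem_erase.mpr ⟨?_, h1⟩⟩, h2, h3⟩
        · intro hfy; exact hy1 (by rw [← h2, hfy, hffx])
        · intro hfy; exact hy2 (by rw [← h2, hfy])
      obtain ⟨k, hk⟩ := he
      exact ⟨k + 1, by omega⟩

lemma toggle_parity {α : Type*} {s t : Set α} (hs : s.Finite) (hts : t ⊆ s) (f : α → α)
    (hf : ∀ x ∈ s, x ∉ t → f x ∈ s ∧ f x ∉ t ∧ f (f x) = x ∧ f x ≠ x) :
    s.ncard % 2 = t.ncard % 2 := by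
  classical
  have hd : (s \ t).Finite := hs.diff
  have heven : Even (s \ t).ncard := by
    have := even_card_of_involution hd.toFinset f (fun x hx => by
      simp only [Set.Finite.mem_toFinset, Set.mem_diff] at hx ⊢
      obtain ⟨h1, h2, h3, h4⟩ := hf x hx.1 hx.2
      exact ⟨⟨h1, h2⟩, h3, h4⟩)
    rwa [← Set.ncard_eq_toFinset_card _ hd] at this
  have h2 := Set.ncard_diff_add_ncard_of_subset hts hs
  obtain ⟨k, hk⟩ := heven
  omega

lemma finite_SSVTQ (lam mu : List ℕ) (n : ℕ) :
    {T : ℕ × ℕ → Finset ℕ | IsSSVTQ lam mu n T}.Finite := by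
  classical
  set E := sCells lam mu with hE
  set Φ : ({x // x ∈ E} → Finset (Fin (2 * n + 1))) → (ℕ × ℕ → Finset ℕ) :=
    fun h c => if hc : c ∈ E then (h ⟨c, hc⟩).image Fin.val else ∅ with hΦ
  apply Set.Finite.subset (Set.finite_range Φ)
  rintro T hT
  refine ⟨fun c => (T c.1).attachFin (fun m hm => ?_), ?_⟩
  · have := hT.inRange c.1 m hm
    omega
  · funext c
    by_cases hc : c ∈ E
    · simp only [hΦ, dif_pos hc]
      ext a
      simp only [Finset.mem_image, Finset.mem_attachFin]
      constructor
      · rintro ⟨b, hb, rfl⟩; exact hb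
      · intro ha
        have := hT.inRange c a ha
        exact ⟨⟨a, by omega⟩, ha, rfl⟩
    · simp only [hΦ, dif_neg hc]
      exact (hT.support c hc).symm

/-- Generalized tableau set: shape `λ` pushed down by `d` rows, letters `≥ 2d+1`. -/
def Sgen (d : ℕ) (lam : List ℕ) (n : ℕ) : Set (ℕ × ℕ → Finset ℕ) :=
  {T | IsSSVTQ (List.replicate d 0 ++ lam) [] n T ∧ ∀ c, ∀ a ∈ T c, 2*d+1 ≤ a}

/-- Canonical first-row entry. -/
def Rrow (d j : ℕ) : Finset ℕ := if j = d+1 then {2*d+1} else {2*d+2}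

/-- Letter toggled at column `m+1` of the first row. -/
def eLet (d m : ℕ) : ℕ := if m = d then 2*d+1 else 2*d+2

/-- Tableaux in `Sgen` whose first row is canonical up to column `m`. -/
def Pset (d l : ℕ) (ls : List ℕ) (n m : ℕ) : Set (ℕ × ℕ → Finset ℕ) :=
  {T | T ∈ Sgen d (l :: ls) n ∧ ∀ j, d+1 ≤ j → j ≤ m → T (d+1, j) = Rrow d j}

lemma mem_Rrow {d j a : ℕ} (h : a ∈ Rrow d j) :
    (a = 2*d+1 ∧ j = d+1) ∨ (a = 2*d+2 ∧ j ≠ d+1) := by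
  by_cases hj : j = d+1
  · rw [Rrow, if_pos hj] at h; exact Or.inl ⟨Finset.mem_singleton.1 h, hj⟩
  · rw [Rrow, if_neg hj] at h; exact Or.inr ⟨Finset.mem_singleton.1 h, hj⟩

lemma eLet_cases (d m : ℕ) : (m = d ∧ eLet d m = 2*d+1) ∨ (m ≠ d ∧ eLet d m = 2*d+2) := by
  by_cases h : m = d <;> simp [eLet, h]

lemma mem_cells' {d l : ℕ} {ls : List ℕ} {i j : ℕ} :
    (i, j) ∈ sCells (List.replicate d 0 ++ (l :: ls)) [] ↔
      d+1 ≤ i ∧ i ≤ d + 1 + ls.length ∧ i ≤ j ∧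
        j ≤ (l :: ls).getD (i - 1 - d) 0 + i - 1 := by
  have hlen : (List.replicate d 0 ++ (l :: ls)).length = d + 1 + ls.length := by
    simp [List.length_replicate]; omega
  rw [mem_sCells, hlen, getD_rep]
  constructor
  · rintro ⟨h1, h2, h3, h4⟩
    split at h4
    · omega
    · refine ⟨by omega, h2, h3, h4⟩
  · rintro ⟨h1, h2, h3, h4⟩
    have hni : ¬ (i - 1 < d) := by omega
    rw [if_neg hni]
    exact ⟨by omega, h2, h3, h4⟩

lemma row1_cell {d l : ℕ} {ls : List ℕ} (hl : 0 < l) {j : ℕ} :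
    (d+1, j) ∈ sCells (List.replicate d 0 ++ (l :: ls)) [] ↔ d+1 ≤ j ∧ j ≤ d + l := by
  rw [mem_cells']
  rw [show d+1-1-d = 0 by omega, List.getD_cons_zero]
  constructor
  · rintro ⟨-, -, h3, h4⟩; omega
  · rintro ⟨h1, h2⟩; refine ⟨le_refl _, by omega, h1, by omega⟩

lemma cell_above {d l : ℕ} {ls : List ℕ} (hchain : (l :: ls).Chain' (· > ·)) {i j : ℕ}
    (hi : d+2 ≤ i) (h : (i, j) ∈ sCells (List.replicate d 0 ++ (l :: ls)) []) :
    (i-1, j) ∈ sCells (List.replicate d 0 ++ (l :: ls)) [] := by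
  rw [mem_cells'] at h ⊢
  obtain ⟨h1, h2, h3, h4⟩ := h
  set q := i - 1 - d with hq
  have hq1 : 1 ≤ q := by omega
  have hgetpos : 1 ≤ (l :: ls).getD q 0 := by omega
  have hqlen : q < (l :: ls).length := by
    by_contra hcon
    rw [List.getD_eq_default _ _ (by omega)] at hgetpos; omega
  have hlt := chain'_getD_lt hchain (k := q - 1) (by omega)
  rw [show q - 1 + 1 = q by omega] at hlt
  rw [show i - 1 - 1 - d = q - 1 by omega]
  exact ⟨by omega, by omega, by omega, by omega⟩

lemma claimA {d n l : ℕ} {ls : List ℕ} (hl : 0 < l) (hchain : (l :: ls).Chain' (· > ·))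
    {T : ℕ × ℕ → Finset ℕ} (hT : T ∈ Sgen d (l :: ls) n) :
    ∀ i j, 2*d+1 ∈ T (i, j) → i = d+1 ∧ j = d+1 := by
  intro i
  induction i using Nat.strong_induction_on with
  | _ i IH =>
    intro j hmem
    have hcell : (i, j) ∈ sCells (List.replicate d 0 ++ (l :: ls)) [] := by
      by_contra hc
      rw [hT.1.support _ hc] at hmem
      exact absurd hmem (Finset.notMem_empty _)
    obtain ⟨h1, h2, h3, h4⟩ := mem_cells'.1 hcell
    rcases Nat.lt_or_ge (d+1) i with hi | hi
    · -- i ≥ d + 2 : look at the cell above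
      exfalso
      have hab := cell_above hchain (by omega) hcell
      have hii : i - 1 + 1 = i := by omega
      have hc2 : (i - 1 + 1, j) ∈ sCells (List.replicate d 0 ++ (l :: ls)) [] := by
        rw [hii]; exact hcell
      have hcw := hT.1.colWeak (i-1) j hab hc2
      rw [hii] at hcw
      obtain ⟨a, ha⟩ := hT.1.cellNonempty _ hab
      have ha1 : a ≤ 2*d+1 := hcw a ha _ hmem
      have ha2 : 2*d+1 ≤ a := hT.2 _ a ha
      have haa : a = 2*d+1 := by omega
      rw [haa] at ha
      obtain ⟨hA, hB⟩ := IH (i-1) (by omega) j ha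
      omega
    · -- i = d+1
      have hieq : i = d+1 := by omega
      subst hieq
      refine ⟨rfl, ?_⟩
      by_contra hj
      have hj2 : d+2 ≤ j := by omega
      rw [show d+1-1-d = 0 by omega, List.getD_cons_zero] at h4
      have hlc : (d+1, j-1) ∈ sCells (List.replicate d 0 ++ (l :: ls)) [] := by
        rw [row1_cell hl]; omega
      have hj1 : j - 1 + 1 = j := by omega
      have hcellj : (d+1, j-1+1) ∈ sCells (List.replicate d 0 ++ (l :: ls)) [] := by
        rw [hj1]; exact hcell
      have hrw := hT.1.rowWeak (d+1) (j-1) hlc hcellj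
      rw [hj1] at hrw
      obtain ⟨a, ha⟩ := hT.1.cellNonempty _ hlc
      have ha1 : a ≤ 2*d+1 := hrw a ha _ hmem
      have ha2 : 2*d+1 ≤ a := hT.2 _ a ha
      have haa : a = 2*d+1 := by omega
      rw [haa] at ha
      have := hT.1.rowOnce (2*d+1) (by omega) (d+1) (j-1) j ha hmem
      omega

lemma claimB {d n l : ℕ} {ls : List ℕ} (hl : 0 < l) (hchain : (l :: ls).Chain' (· > ·))
    {T : ℕ × ℕ → Finset ℕ} (hT : T ∈ Sgen d (l :: ls) n) :
    ∀ i j, 2*d+2 ∈ T (i, j) → i = d+1 := by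
  intro i j hmem
  have hcell : (i, j) ∈ sCells (List.replicate d 0 ++ (l :: ls)) [] := by
    by_contra hc
    rw [hT.1.support _ hc] at hmem
    exact absurd hmem (Finset.notMem_empty _)
  obtain ⟨h1, h2, h3, h4⟩ := mem_cells'.1 hcell
  by_contra hne
  have hi : d+2 ≤ i := by omega
  have hab := cell_above hchain hi hcell
  have hii : i - 1 + 1 = i := by omega
  have hc2 : (i - 1 + 1, j) ∈ sCells (List.replicate d 0 ++ (l :: ls)) [] := by
    rw [hii]; exact hcell
  have hcw := hT.1.colWeak (i-1) j hab hc2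
  rw [hii] at hcw
  obtain ⟨a, ha⟩ := hT.1.cellNonempty _ hab
  have h5 : a ≤ 2*d+2 := hcw a ha _ hmem
  have h6 : 2*d+1 ≤ a := hT.2 _ a ha
  rcases (show a = 2*d+1 ∨ a = 2*d+2 by omega) with haa | haa
  · rw [haa] at ha
    obtain ⟨-, hj⟩ := claimA hl hchain hT (i-1) j ha
    omega
  · rw [haa] at ha
    have := hT.1.colOnce (2*d+2) (by omega) (i-1) i j ha hmem
    omega

lemma lettersHigh {d n l : ℕ} {ls : List ℕ} (hl : 0 < l) (hchain : (l :: ls).Chain' (· > ·))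
    {T : ℕ × ℕ → Finset ℕ} (hT : T ∈ Sgen d (l :: ls) n) {c : ℕ × ℕ} (hc : c.1 ≠ d+1) :
    ∀ a ∈ T c, 2*d+3 ≤ a := by
  obtain ⟨i, j⟩ := c
  intro a ha
  have h6 : 2*d+1 ≤ a := hT.2 _ a ha
  rcases (show a = 2*d+1 ∨ a = 2*d+2 ∨ 2*d+3 ≤ a by omega) with haa | haa | haa
  · rw [haa] at ha
    exact absurd (claimA hl hchain hT i j ha).1 hc
  · rw [haa] at ha
    exact absurd (claimB hl hchain hT i j ha) hc
  · exact haa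

lemma removal {d n : ℕ} {lam : List ℕ} {T : ℕ × ℕ → Finset ℕ} (hT : T ∈ Sgen d lam n)
    (c₀ : ℕ × ℕ) (e : ℕ) (hne : T c₀ ≠ {e}) :
    Function.update T c₀ ((T c₀).erase e) ∈ Sgen d lam n := by
  classical
  have key : ∀ c a, a ∈ Function.update T c₀ ((T c₀).erase e) c → a ∈ T c := by
    intro c a ha
    by_cases hc : c = c₀
    · subst hc; rw [Function.update_self] at ha; exact Finset.mem_of_mem_erase ha
    · rwa [Function.update_of_ne hc] at ha
  refine ⟨⟨?_, ?_, ?_, ?_, ?_, ?_, ?_⟩, ?_⟩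
  · intro c hc
    by_cases h : c = c₀
    · subst h; rw [Function.update_self, hT.1.support _ hc]; simp
    · rw [Function.update_of_ne h]; exact hT.1.support _ hc
  · intro c hc
    by_cases h : c = c₀
    · subst h
      rw [Function.update_self]
      have hnonempty := hT.1.cellNonempty _ hc
      rw [Finset.nonempty_iff_ne_empty]
      intro hemp
      rcases (Finset.erase_eq_empty_iff _ _).mp hemp with h' | h'
      · exact (Finset.nonempty_iff_ne_empty.mp hnonempty) h'
      · exact hne h'
    · rw [Function.update_of_ne h]; exact hT.1.cellNonempty _ hc
  · intro c a ha; exact hT.1.inRange c a (key c a ha)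
  · intro i j hc1 hc2 a ha b hb
    exact hT.1.rowWeak i j hc1 hc2 a (key _ _ ha) b (key _ _ hb)
  · intro i j hc1 hc2 a ha b hb
    exact hT.1.colWeak i j hc1 hc2 a (key _ _ ha) b (key _ _ hb)
  · intro a hp i i' j hm1 hm2
    exact hT.1.colOnce a hp i i' j (key _ _ hm1) (key _ _ hm2)
  · intro a hp i j j' hm1 hm2
    exact hT.1.rowOnce a hp i j j' (key _ _ hm1) (key _ _ hm2)
  · intro c a ha; exact hT.2 c a (key c a ha)

lemma mem_update_insert {T : ℕ × ℕ → Finset ℕ} {c₀ c : ℕ × ℕ} {e a : ℕ} :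
    a ∈ Function.update T c₀ (insert e (T c₀)) c ↔ a ∈ T c ∨ (c = c₀ ∧ a = e) := by
  by_cases hc : c = c₀
  · subst hc
    rw [Function.update_self, Finset.mem_insert]
    tauto
  · rw [Function.update_of_ne hc]
    tauto

lemma insertion {d l n m : ℕ} {ls : List ℕ} (hl : 0 < l) (hchain : (l :: ls).Chain' (· > ·))
    (hn : d + (ls.length + 1) ≤ n) (hm : d ≤ m) (hm2 : m + 1 ≤ d + l)
    {T : ℕ × ℕ → Finset ℕ} (hT : T ∈ Pset d l ls n m) :
    Function.update T (d+1, m+1) (insert (eLet d m) (T (d+1, m+1))) ∈ Sgen d (l :: ls) n := by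
  classical
  obtain ⟨hS, hrows⟩ := hT
  have hel : 2*d+1 ≤ eLet d m ∧ eLet d m ≤ 2*d+2 := by
    rcases eLet_cases d m with ⟨-, h⟩ | ⟨-, h⟩ <;> omega
  have hc₀cell : (d+1, m+1) ∈ sCells (List.replicate d 0 ++ (l :: ls)) [] :=
    (row1_cell hl).2 ⟨by omega, by omega⟩
  have hmem : ∀ (c : ℕ × ℕ) (a : ℕ),
      a ∈ Function.update T (d+1, m+1) (insert (eLet d m) (T (d+1, m+1))) c ↔
        a ∈ T c ∨ (c = (d+1, m+1) ∧ a = eLet d m) := fun c a => mem_update_insert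
  refine ⟨⟨?_, ?_, ?_, ?_, ?_, ?_, ?_⟩, ?_⟩
  · -- support
    intro c hc
    have hcne : c ≠ (d+1, m+1) := by rintro rfl; exact hc hc₀cell
    rw [Function.update_of_ne hcne]
    exact hS.1.support _ hc
  · -- cellNonempty
    intro c hc
    by_cases h : c = (d+1, m+1)
    · subst h; rw [Function.update_self]; exact Finset.insert_nonempty _ _
    · rw [Function.update_of_ne h]; exact hS.1.cellNonempty _ hc
  · -- inRange
    intro c a ha
    rcases (hmem c a).1 ha with h | ⟨-, he⟩
    · exact hS.1.inRange c a h
    · constructor <;> omega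
  · -- rowWeak
    intro i j hc1 hc2 a ha b hb
    rcases (hmem _ _).1 ha with ha' | ⟨hac, hae⟩ <;> rcases (hmem _ _).1 hb with hb' | ⟨hbc, hbe⟩
    · exact hS.1.rowWeak i j hc1 hc2 a ha' b hb'
    · -- b is the new letter at (d+1, m+1), a ∈ T (i, j) with i = d+1, j = m
      simp only [Prod.mk.injEq] at hbc
      obtain ⟨hi, hj⟩ := hbc
      have hij : i ≤ j := (mem_cells'.1 hc1).2.2.1
      have hmj : j = m := by omega
      have hRr : T (d+1, m) = Rrow d m := hrows m (by omega) le_rfl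
      rw [hi, hmj, hRr] at ha'
      rcases eLet_cases d m with ⟨hmd, hev⟩ | ⟨hmd, hev⟩
      · omega
      · rcases mem_Rrow ha' with ⟨h', -⟩ | ⟨h', -⟩ <;> omega
    · -- a is the new letter at (d+1, m+1), b ∈ T (i, j+1) = T (d+1, m+2)
      simp only [Prod.mk.injEq] at hac
      obtain ⟨hi, hj⟩ := hac
      have hb2 : 2*d+1 ≤ b := hS.2 _ b hb'
      rcases (show b = 2*d+1 ∨ 2*d+2 ≤ b by omega) with hbv | hbv
      · rw [hbv] at hb'
        obtain ⟨-, hj1⟩ := claimA hl hchain hS i (j+1) hb'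
        omega
      · omega
    · simp only [Prod.mk.injEq] at hac hbc; omega
  · -- colWeak
    intro i j hc1 hc2 a ha b hb
    rcases (hmem _ _).1 ha with ha' | ⟨hac, hae⟩ <;> rcases (hmem _ _).1 hb with hb' | ⟨hbc, hbe⟩
    · exact hS.1.colWeak i j hc1 hc2 a ha' b hb'
    · -- b new: i+1 = d+1, so (i,j) is a cell in row ≤ d: impossible
      simp only [Prod.mk.injEq] at hbc
      have := (mem_cells'.1 hc1).1
      omega
    · -- a new: (i,j) = (d+1, m+1), b ∈ T (d+2, m+1)
      simp only [Prod.mk.injEq] at hac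
      obtain ⟨hi, hj⟩ := hac
      have hbv : 2*d+3 ≤ b := by
        refine lettersHigh hl hchain hS (c := (i+1, j)) ?_ b hb'
        simp; omega
      omega
    · simp only [Prod.mk.injEq] at hac hbc; omega
  · -- colOnce
    intro a hp i i' j hm1 hm2
    rcases (hmem _ _).1 hm1 with h1' | ⟨hc1, he1⟩ <;> rcases (hmem _ _).1 hm2 with h2' | ⟨hc2, he2⟩
    · exact hS.1.colOnce a hp i i' j h1' h2'
    · -- second new, first old
      simp only [Prod.mk.injEq] at hc2
      rcases eLet_cases d m with ⟨hmd, hev⟩ | ⟨hmd, hev⟩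
      · omega
      · have hav : a = 2*d+2 := by omega
        rw [hav] at h1'
        have := claimB hl hchain hS i j h1'
        omega
    · simp only [Prod.mk.injEq] at hc1
      rcases eLet_cases d m with ⟨hmd, hev⟩ | ⟨hmd, hev⟩
      · omega
      · have hav : a = 2*d+2 := by omega
        rw [hav] at h2'
        have := claimB hl hchain hS i' j h2'
        omega
    · simp only [Prod.mk.injEq] at hc1 hc2; omega
  · -- rowOnce
    intro a hp i j j' hm1 hm2
    rcases (hmem _ _).1 hm1 with h1' | ⟨hc1, he1⟩ <;> rcases (hmem _ _).1 hm2 with h2' | ⟨hc2, he2⟩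
    · exact hS.1.rowOnce a hp i j j' h1' h2'
    · simp only [Prod.mk.injEq] at hc2
      rcases eLet_cases d m with ⟨hmd, hev⟩ | ⟨hmd, hev⟩
      · have hav : a = 2*d+1 := by omega
        rw [hav] at h1'
        obtain ⟨-, hcol⟩ := claimA hl hchain hS i j h1'
        omega
      · omega
    · simp only [Prod.mk.injEq] at hc1
      rcases eLet_cases d m with ⟨hmd, hev⟩ | ⟨hmd, hev⟩
      · have hav : a = 2*d+1 := by omega
        rw [hav] at h2'
        obtain ⟨-, hcol⟩ := claimA hl hchain hS i j' h2'
        omega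
      · omega
    · simp only [Prod.mk.injEq] at hc1 hc2; omega
  · -- lower bound
    intro c a ha
    rcases (hmem c a).1 ha with h | ⟨-, he⟩
    · exact hS.2 c a h
    · omega

lemma Rrow_eq_singleton {d m : ℕ} : Rrow d (m+1) = {eLet d m} := by
  by_cases hmd : m = d
  · subst hmd; rw [Rrow, if_pos rfl, eLet, if_pos rfl]
  · rw [Rrow, if_neg (by omega), eLet, if_neg hmd]

lemma step_parity {d l n m : ℕ} {ls : List ℕ} (hl : 0 < l)
    (hchain : (l :: ls).Chain' (· > ·)) (hn : d + (ls.length + 1) ≤ n)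
    (hm : d ≤ m) (hm2 : m + 1 ≤ d + l) :
    (Pset d l ls n m).ncard % 2 = (Pset d l ls n (m+1)).ncard % 2 := by
  classical
  have hfin : (Pset d l ls n m).Finite :=
    Set.Finite.subset (finite_SSVTQ (List.replicate d 0 ++ (l :: ls)) [] n)
      (fun T hT => hT.1.1)
  have hc₀cell : (d+1, m+1) ∈ sCells (List.replicate d 0 ++ (l :: ls)) [] :=
    (row1_cell hl).2 ⟨by omega, by omega⟩
  refine toggle_parity hfin ?_
    (fun T => Function.update T (d+1, m+1)
      (if eLet d m ∈ T (d+1, m+1) then (T (d+1, m+1)).erase (eLet d m)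
       else insert (eLet d m) (T (d+1, m+1)))) ?_
  · intro T hT
    exact ⟨hT.1, fun j h1 h2 => hT.2 j h1 (by omega)⟩
  · intro T hTm hTnot
    beta_reduce
    have hne : T (d+1, m+1) ≠ {eLet d m} := by
      intro hcon
      apply hTnot
      refine ⟨hTm.1, fun j h1 h2 => ?_⟩
      rcases Nat.lt_or_ge j (m+1) with hj | hj
      · exact hTm.2 j h1 (by omega)
      · rw [show j = m+1 by omega, hcon, Rrow_eq_singleton]
    by_cases hcase : eLet d m ∈ T (d+1, m+1)
    · -- removal
      rw [if_pos hcase]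
      have hSg : Function.update T (d+1, m+1) ((T (d+1, m+1)).erase (eLet d m))
          ∈ Sgen d (l :: ls) n := removal hTm.1 _ _ hne
      have hrows : ∀ j, d+1 ≤ j → j ≤ m →
          Function.update T (d+1, m+1) ((T (d+1, m+1)).erase (eLet d m)) (d+1, j)
            = Rrow d j := by
        intro j h1 h2
        rw [Function.update_of_ne (by simp [Prod.ext_iff]; omega)]
        exact hTm.2 j h1 h2
      refine ⟨⟨hSg, hrows⟩, ?_, ?_, ?_⟩
      · -- not in Pset (m+1)
        rintro ⟨-, hP⟩
        have := hP (m+1) (by omega) le_rfl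
        rw [Function.update_self, Rrow_eq_singleton] at this
        have := this ▸ Finset.mem_singleton_self (eLet d m)
        exact Finset.notMem_erase _ _ this
      · -- involution
        have hval : Function.update T (d+1, m+1) ((T (d+1, m+1)).erase (eLet d m)) (d+1, m+1)
            = (T (d+1, m+1)).erase (eLet d m) := Function.update_self _ _ _
        rw [hval, if_neg (Finset.notMem_erase _ _),
          Finset.insert_erase hcase, Function.update_idem, Function.update_eq_self]
      · -- changes T
        intro hEq
        have := congrFun hEq (d+1, m+1)
        rw [Function.update_self] at this
        exact (Finset.erase_eq_self.mp this) hcase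
    · -- insertion
      rw [if_neg hcase]
      have hSg := insertion hl hchain hn hm hm2 hTm
      have hrows : ∀ j, d+1 ≤ j → j ≤ m →
          Function.update T (d+1, m+1) (insert (eLet d m) (T (d+1, m+1))) (d+1, j)
            = Rrow d j := by
        intro j h1 h2
        rw [Function.update_of_ne (by simp [Prod.ext_iff]; omega)]
        exact hTm.2 j h1 h2
      refine ⟨⟨hSg, hrows⟩, ?_, ?_, ?_⟩
      · rintro ⟨-, hP⟩
        have hP1 := hP (m+1) (by omega) le_rfl
        rw [Function.update_self, Rrow_eq_singleton] at hP1
        rcases Finset.subset_singleton_iff.mp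
            (hP1 ▸ Finset.subset_insert (eLet d m) (T (d+1, m+1))) with h' | h'
        · exact Finset.nonempty_iff_ne_empty.mp (hTm.1.1.cellNonempty _ hc₀cell) h'
        · exact hne h'
      · have hval : Function.update T (d+1, m+1) (insert (eLet d m) (T (d+1, m+1))) (d+1, m+1)
            = insert (eLet d m) (T (d+1, m+1)) := Function.update_self _ _ _
        rw [hval, if_pos (Finset.mem_insert_self _ _),
          Finset.erase_insert hcase, Function.update_idem, Function.update_eq_self]
      · intro hEq
        have := congrFun hEq (d+1, m+1)
        rw [Function.update_self] at this
        exact hcase (this ▸ Finset.mem_insert_self _ _)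

lemma cells_tail {d l : ℕ} {ls : List ℕ} {i j : ℕ} :
    (i, j) ∈ sCells (List.replicate (d+1) 0 ++ ls) [] ↔
      ((i, j) ∈ sCells (List.replicate d 0 ++ (l :: ls)) [] ∧ i ≠ d+1) := by
  have hlen : (List.replicate (d+1) 0 ++ ls).length = d + 1 + ls.length := by
    simp [List.length_replicate]
  rw [mem_sCells, hlen, getD_rep, mem_cells']
  constructor
  · rintro ⟨h1, h2, h3, h4⟩
    split at h4
    · omega
    · have hg : ls.getD (i-1-(d+1)) 0 = (l :: ls).getD (i-1-d) 0 := by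
        rw [show i-1-d = (i-1-(d+1)) + 1 by omega, List.getD_cons_succ]
      refine ⟨⟨by omega, by omega, h3, by rw [← hg]; exact h4⟩, by omega⟩
  · rintro ⟨⟨h1, h2, h3, h4⟩, hne⟩
    have hg : ls.getD (i-1-(d+1)) 0 = (l :: ls).getD (i-1-d) 0 := by
      rw [show i-1-d = (i-1-(d+1)) + 1 by omega, List.getD_cons_succ]
    rw [if_neg (by omega)]
    exact ⟨by omega, by omega, h3, by rw [hg]; exact h4⟩

/-- Delete the first row. -/
def Psi (d : ℕ) (T : ℕ × ℕ → Finset ℕ) : ℕ × ℕ → Finset ℕ :=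
  fun c => if c.1 = d+1 then ∅ else T c

/-- Restore the canonical first row. -/
def Phi (d l : ℕ) (ls : List ℕ) (T' : ℕ × ℕ → Finset ℕ) : ℕ × ℕ → Finset ℕ :=
  fun c => if c.1 = d+1 ∧ c ∈ sCells (List.replicate d 0 ++ (l :: ls)) []
    then Rrow d c.2 else T' c

lemma maps1 {d l n : ℕ} {ls : List ℕ} (hl : 0 < l) (hchain : (l :: ls).Chain' (· > ·))
    {T : ℕ × ℕ → Finset ℕ} (hT : T ∈ Pset d l ls n (d + l)) :
    Psi d T ∈ Sgen (d+1) ls n := by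
  obtain ⟨hSG, hrow⟩ := hT
  have hmem : ∀ c a, a ∈ Psi d T c → c.1 ≠ d+1 ∧ a ∈ T c := by
    intro c a ha
    unfold Psi at ha
    split at ha
    · exact absurd ha (Finset.notMem_empty a)
    · exact ⟨‹_›, ha⟩
  refine ⟨⟨?_, ?_, ?_, ?_, ?_, ?_, ?_⟩, ?_⟩
  · intro c hc
    unfold Psi
    split
    · rfl
    · apply hSG.1.support
      intro hcc
      apply hc
      obtain ⟨i, j⟩ := c
      rw [cells_tail (l := l)]
      exact ⟨hcc, ‹_›⟩
  · intro c hc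
    obtain ⟨i, j⟩ := c
    rw [cells_tail (l := l)] at hc
    obtain ⟨hc1, hne⟩ := hc
    unfold Psi
    rw [if_neg hne]
    exact hSG.1.cellNonempty _ hc1
  · intro c a ha; exact hSG.1.inRange c a (hmem c a ha).2
  · intro i j hc1 hc2 a ha b hb
    rw [cells_tail (l := l)] at hc1 hc2
    exact hSG.1.rowWeak i j hc1.1 hc2.1 a (hmem _ _ ha).2 b (hmem _ _ hb).2
  · intro i j hc1 hc2 a ha b hb
    rw [cells_tail (l := l)] at hc1 hc2
    exact hSG.1.colWeak i j hc1.1 hc2.1 a (hmem _ _ ha).2 b (hmem _ _ hb).2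
  · intro a hp i i' j h1 h2
    exact hSG.1.colOnce a hp i i' j (hmem _ _ h1).2 (hmem _ _ h2).2
  · intro a hp i j j' h1 h2
    exact hSG.1.rowOnce a hp i j j' (hmem _ _ h1).2 (hmem _ _ h2).2
  · intro c a ha
    obtain ⟨hne, haT⟩ := hmem c a ha
    have := lettersHigh hl hchain hSG (c := c) hne a haT
    omega

lemma maps2 {d l n : ℕ} {ls : List ℕ} (hl : 0 < l) (hchain : (l :: ls).Chain' (· > ·))
    (hn : d + (ls.length + 1) ≤ n)
    {T' : ℕ × ℕ → Finset ℕ} (hT' : T' ∈ Sgen (d+1) ls n) :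
    Phi d l ls T' ∈ Pset d l ls n (d + l) := by
  obtain ⟨hSG', hlow⟩ := hT'
  have hmem : ∀ c a, a ∈ Phi d l ls T' c →
      (c.1 = d+1 ∧ c ∈ sCells (List.replicate d 0 ++ (l :: ls)) [] ∧ a ∈ Rrow d c.2)
        ∨ a ∈ T' c := by
    intro c a ha
    unfold Phi at ha
    split at ha
    · exact Or.inl ⟨‹_ ∧ _›.1, ‹_ ∧ _›.2, ha⟩
    · exact Or.inr ha
  have hTlow : ∀ c a, a ∈ T' c → 2*d+3 ≤ a := by
    intro c a ha
    have := hlow c a ha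
    omega
  have hT'row : ∀ i j (a : ℕ), a ∈ T' (i, j) → i ≠ d+1 := by
    intro i j a ha hi
    have hnc : (i, j) ∉ sCells (List.replicate (d+1) 0 ++ ls) [] := by
      rw [cells_tail (l := l)]
      rintro ⟨-, hne⟩
      exact hne hi
    rw [hSG'.support _ hnc] at ha
    exact absurd ha (Finset.notMem_empty a)
  refine ⟨⟨⟨?_, ?_, ?_, ?_, ?_, ?_, ?_⟩, ?_⟩, ?_⟩
  · -- support
    intro c hc
    unfold Phi
    rw [if_neg (fun h => hc h.2)]
    apply hSG'.support
    obtain ⟨i, j⟩ := c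
    rw [cells_tail (l := l)]
    rintro ⟨hmem', -⟩
    exact hc hmem'
  · -- nonempty
    intro c hc
    unfold Phi
    split
    · unfold Rrow; split <;> simp
    · next hns =>
      apply hSG'.cellNonempty
      obtain ⟨i, j⟩ := c
      rw [cells_tail (l := l)]
      exact ⟨hc, fun hi => hns ⟨hi, hc⟩⟩
  · -- inRange
    intro c a ha
    rcases hmem c a ha with ⟨-, -, hR⟩ | hTm
    · rcases mem_Rrow hR with ⟨h, -⟩ | ⟨h, -⟩ <;> constructor <;> omega
    · exact hSG'.inRange c a hTm
  · -- rowWeak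
    intro i j hc1 hc2 a ha b hb
    have hij : i ≤ j := (mem_cells'.1 hc1).2.2.1
    rcases hmem _ _ ha with ⟨hi1, hcell1, hR1⟩ | hO1 <;>
      rcases hmem _ _ hb with ⟨hi2, hcell2, hR2⟩ | hO2
    · rcases mem_Rrow hR1 with ⟨ha1, -⟩ | ⟨ha1, -⟩ <;>
        rcases mem_Rrow hR2 with ⟨hb1, hb2⟩ | ⟨hb1, -⟩ <;> omega
    · have := hTlow _ _ hO2
      rcases mem_Rrow hR1 with ⟨ha1, -⟩ | ⟨ha1, -⟩ <;> omega
    · exact absurd hi2 (hT'row i j a hO1)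
    · have hne1 : i ≠ d+1 := hT'row i j a hO1
      exact hSG'.rowWeak i j ((cells_tail (l := l)).2 ⟨hc1, hne1⟩)
        ((cells_tail (l := l)).2 ⟨hc2, hne1⟩) a hO1 b hO2
  · -- colWeak
    intro i j hc1 hc2 a ha b hb
    have hi1' : d+1 ≤ i := (mem_cells'.1 hc1).1
    rcases hmem _ _ ha with ⟨hi1, hcell1, hR1⟩ | hO1 <;>
      rcases hmem _ _ hb with ⟨hi2, hcell2, hR2⟩ | hO2
    · omega
    · have := hTlow _ _ hO2
      rcases mem_Rrow hR1 with ⟨ha1, -⟩ | ⟨ha1, -⟩ <;> omega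
    · have := hT'row i j a hO1
      omega
    · have hne1 : i ≠ d+1 := hT'row i j a hO1
      have hne2 : i+1 ≠ d+1 := hT'row (i+1) j b hO2
      exact hSG'.colWeak i j ((cells_tail (l := l)).2 ⟨hc1, hne1⟩)
        ((cells_tail (l := l)).2 ⟨hc2, hne2⟩) a hO1 b hO2
  · -- colOnce
    intro a hp i i' j h1 h2
    rcases hmem _ _ h1 with ⟨hi1, hcell1, hR1⟩ | hO1 <;>
      rcases hmem _ _ h2 with ⟨hi2, hcell2, hR2⟩ | hO2
    · omega
    · have := hTlow _ _ hO2
      rcases mem_Rrow hR1 with ⟨ha1, -⟩ | ⟨ha1, -⟩ <;> omega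
    · have := hTlow _ _ hO1
      rcases mem_Rrow hR2 with ⟨ha1, -⟩ | ⟨ha1, -⟩ <;> omega
    · exact hSG'.colOnce a hp i i' j hO1 hO2
  · -- rowOnce
    intro a hp i j j' h1 h2
    rcases hmem _ _ h1 with ⟨hi1, hcell1, hR1⟩ | hO1 <;>
      rcases hmem _ _ h2 with ⟨hi2, hcell2, hR2⟩ | hO2
    · rcases mem_Rrow hR1 with ⟨ha1, hj1⟩ | ⟨ha1, -⟩ <;>
        rcases mem_Rrow hR2 with ⟨hb1, hj2⟩ | ⟨hb1, -⟩ <;> omega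
    · have := hTlow _ _ hO2
      rcases mem_Rrow hR1 with ⟨ha1, -⟩ | ⟨ha1, -⟩ <;> omega
    · have := hTlow _ _ hO1
      rcases mem_Rrow hR2 with ⟨ha1, -⟩ | ⟨ha1, -⟩ <;> omega
    · exact hSG'.rowOnce a hp i j j' hO1 hO2
  · -- lower bound
    intro c a ha
    rcases hmem c a ha with ⟨-, -, hR⟩ | hTm
    · rcases mem_Rrow hR with ⟨h, -⟩ | ⟨h, -⟩ <;> omega
    · have := hTlow c a hTm
      omega
  · -- canonical first row
    intro j hj1 hj2
    have hcell : (d+1, j) ∈ sCells (List.replicate d 0 ++ (l :: ls)) [] :=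
      (row1_cell hl).2 ⟨hj1, hj2⟩
    unfold Phi
    rw [if_pos ⟨rfl, hcell⟩]

lemma psiphi {d l n : ℕ} {ls : List ℕ} {T' : ℕ × ℕ → Finset ℕ}
    (hT' : T' ∈ Sgen (d+1) ls n) : Psi d (Phi d l ls T') = T' := by
  funext c
  unfold Psi Phi
  by_cases h : c.1 = d+1
  · rw [if_pos h]
    symm
    apply hT'.1.support
    obtain ⟨i, j⟩ := c
    rw [cells_tail (l := l)]
    rintro ⟨-, hne⟩
    exact hne h
  · rw [if_neg h, if_neg (fun hh => h hh.1)]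

lemma phipsi {d l n : ℕ} {ls : List ℕ} (hl : 0 < l) {T : ℕ × ℕ → Finset ℕ}
    (hT : T ∈ Pset d l ls n (d + l)) : Phi d l ls (Psi d T) = T := by
  funext c
  unfold Phi Psi
  by_cases h : c.1 = d+1 ∧ c ∈ sCells (List.replicate d 0 ++ (l :: ls)) []
  · rw [if_pos h]
    obtain ⟨i, j⟩ := c
    obtain ⟨h1, h2⟩ := h
    simp only at h1
    subst h1
    have hj := (row1_cell hl).1 h2
    exact (hT.2 j hj.1 hj.2).symm
  · rw [if_neg h]
    by_cases hc1 : c.1 = d+1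
    · have hcc : c ∉ sCells (List.replicate d 0 ++ (l :: ls)) [] := fun hcc => h ⟨hc1, hcc⟩
      rw [if_pos hc1, hT.1.1.support _ hcc]
    · rw [if_neg hc1]

lemma bridge {d l n : ℕ} {ls : List ℕ} (hl : 0 < l) (hchain : (l :: ls).Chain' (· > ·))
    (hn : d + (ls.length + 1) ≤ n) :
    (Pset d l ls n (d + l)).ncard = (Sgen (d+1) ls n).ncard := by
  have hinj : Set.InjOn (Psi d) (Pset d l ls n (d + l)) := by
    intro T1 h1 T2 h2 heq
    rw [← phipsi hl h1, ← phipsi hl h2, heq]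
  have himg : Psi d '' (Pset d l ls n (d + l)) = Sgen (d+1) ls n := by
    apply subset_antisymm
    · rintro _ ⟨T, hT, rfl⟩
      exact maps1 hl hchain hT
    · intro T' hT'
      exact ⟨Phi d l ls T', maps2 hl hchain hn hT', psiphi hT'⟩
  rw [← Set.ncard_image_of_injOn hinj, himg]

lemma key_odd (lam : List ℕ) : ∀ d n : ℕ, lam.Chain' (· > ·) → (∀ p ∈ lam, 0 < p) →
    d + lam.length ≤ n → Odd (Sgen d lam n).ncard := by
  induction lam with
  | nil =>
    intro d n _ _ _
    have hcells : ∀ c : ℕ × ℕ, c ∉ sCells (List.replicate d 0 ++ ([] : List ℕ)) [] := by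
      rintro ⟨i, j⟩ hc
      rw [mem_sCells] at hc
      obtain ⟨h1, h2, h3, h4⟩ := hc
      rw [getD_rep] at h4
      have hz : (if i - 1 < d then 0 else List.getD [] (i-1-d) 0) = 0 := by
        split <;> simp
      rw [hz] at h4
      omega
    have hset : Sgen d [] n = {fun _ => ∅} := by
      apply Set.eq_singleton_iff_unique_mem.mpr
      constructor
      · refine ⟨⟨fun c _ => rfl, fun c hc => absurd hc (hcells c),
          fun c a ha => absurd ha (Finset.notMem_empty a),
          fun i j hc1 _ => absurd hc1 (hcells _),
          fun i j hc1 _ => absurd hc1 (hcells _),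
          fun a _ i i' j h1 => absurd h1 (Finset.notMem_empty a),
          fun a _ i j j' h1 => absurd h1 (Finset.notMem_empty a)⟩,
          fun c a ha => absurd ha (Finset.notMem_empty a)⟩
      · intro T hT
        funext c
        exact hT.1.support c (hcells c)
    rw [hset, Set.ncard_singleton]
    exact odd_one
  | cons l ls ih =>
    intro d n hchain hpos hn
    have hl : 0 < l := hpos l List.mem_cons_self
    have hchain' : ls.Chain' (· > ·) := hchain.tail
    have hpos' : ∀ p ∈ ls, 0 < p := fun p hp => hpos p (List.mem_cons_of_mem _ hp)
    have hn' : d + (ls.length + 1) ≤ n := by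
      rw [List.length_cons] at hn; exact hn
    have hPd : Pset d l ls n d = Sgen d (l :: ls) n := by
      apply Set.ext
      intro T
      refine ⟨fun h => h.1, fun h => ⟨h, fun j h1 h2 => absurd (h1.trans h2) (by omega)⟩⟩
    have hstep : ∀ m, d ≤ m → m ≤ d + l →
        (Sgen d (l :: ls) n).ncard % 2 = (Pset d l ls n m).ncard % 2 := by
      intro m hdm
      induction m, hdm using Nat.le_induction with
      | base => intro _; rw [hPd]
      | succ m hdm ihm =>
        intro hm2
        rw [ihm (by omega), step_parity hl hchain hn' hdm (by omega)]
    have hbr := bridge (d := d) hl hchain hn'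
    have hodd := ih (d+1) n hchain' hpos' (by omega)
    rw [Nat.odd_iff] at hodd ⊢
    rw [hstep (d + l) (by omega) le_rfl, hbr]
    exact hodd

end SSVTQAux

/-- the number of shifted set-valued semistandard tableaux of
Q-type of shape `λ` in `n` letters is odd. -/
theorem ssvtQ_card_odd (lam : List ℕ) (n : ℕ)
    (h : IsStrictPartition lam) (hn : lam.length ≤ n) :
    Odd {T : ℕ × ℕ → Finset ℕ | IsSSVTQ lam [] n T}.ncard := by
  obtain ⟨hchain, hpos⟩ := h
  have heq : {T : ℕ × ℕ → Finset ℕ | IsSSVTQ lam [] n T} = Sgen 0 lam n := by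
    ext T
    simp only [Set.mem_setOf_eq, Sgen]
    constructor
    · intro hT
      exact ⟨hT, fun c a ha => (hT.inRange c a ha).1⟩
    · rintro ⟨h1, -⟩
      exact h1
  rw [heq]
  exact key_odd lam 0 n hchain hpos (by simpa using hn)
end

section
/- With the K-theoretic Schur P-function GP_λ(x_1,...,x_n | β) defined as the tableau generating function Σ_T β^{|T|-|λ|} x^{ω(T)} over shifted set-valued tableaux of P-type, the specialization x_1 = ... = x_n = β together with the substitution β ↦ -β^{-1} yields GP_λ(β,...,β | -β^{-1}) = β^{|λ|}. -/
open Finset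

namespace GPaux

open Finset
open scoped Classical

/-- cells of the straight shifted shape -/
abbrev cells (lam : List ℕ) : Finset (ℕ × ℕ) := sCells lam []

lemma getD_le_foldr (l : List ℕ) (i : ℕ) : l.getD i 0 ≤ l.foldr max 0 := by
  induction l generalizing i with
  | nil => simp
  | cons a t ih =>
    cases i with
    | zero => simp [List.getD_cons_zero]
    | succ i =>
      rw [List.getD_cons_succ]
      exact le_trans (ih i) (le_trans (le_max_right a _) (le_of_eq rfl))

lemma mem_cells {lam : List ℕ} {c : ℕ × ℕ} :
    c ∈ cells lam ↔ 1 ≤ c.1 ∧ c.1 ≤ lam.length ∧ c.1 ≤ c.2 ∧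
      c.2 ≤ lam.getD (c.1 - 1) 0 + c.1 - 1 := by
  have hfr := getD_le_foldr lam (c.1 - 1)
  simp only [cells, sCells, mem_filter, mem_product, mem_range, List.getD_nil,
    zero_add]
  constructor
  · rintro ⟨-, h1, h2, h3, h4⟩; exact ⟨h1, h2, h3, h4⟩
  · rintro ⟨h1, h2, h3, h4⟩
    exact ⟨⟨by omega, by omega⟩, h1, h2, h3, h4⟩

lemma getD_step {lam : List ℕ} (h : lam.Chain' (· > ·)) :
    ∀ i, i + 1 < lam.length → lam.getD (i + 1) 0 < lam.getD i 0 := by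
  intro i hi
  have hi' : i < lam.length := by omega
  rw [List.getD_eq_getElem lam 0 hi, List.getD_eq_getElem lam 0 hi']
  exact List.isChain_iff_getElem.mp h i (by omega)

lemma getD_mono {lam : List ℕ} (h : lam.Chain' (· > ·)) :
    ∀ {i k : ℕ}, k ≤ i → i < lam.length → lam.getD i 0 + (i - k) ≤ lam.getD k 0 := by
  intro i
  induction i with
  | zero => intro k hk _; interval_cases k; simp
  | succ i ih =>
    intro k hk hi
    rcases Nat.eq_or_lt_of_le hk with rfl | hk'
    · simp
    · have h1 := getD_step h i hi
      have h2 := ih (k := k) (by omega) (by omega)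
      omega

lemma row_contig {lam : List ℕ} {i j k : ℕ} (h1 : (i, j) ∈ cells lam)
    (hk1 : i ≤ k) (hk2 : k ≤ j) : (i, k) ∈ cells lam := by
  rw [mem_cells] at h1 ⊢; simp at h1 ⊢; omega

lemma col_contig {lam : List ℕ} (hch : lam.Chain' (· > ·)) {i1 i2 j k : ℕ}
    (h1 : (i1, j) ∈ cells lam) (h2 : (i2, j) ∈ cells lam)
    (hk1 : i1 ≤ k) (hk2 : k ≤ i2) : (k, j) ∈ cells lam := by
  rw [mem_cells] at h1 h2 ⊢
  simp only at h1 h2 ⊢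
  have hm := getD_mono hch (i := i2 - 1) (k := k - 1) (by omega) (by omega)
  omega

lemma sum_getD (l : List ℕ) : ∑ i ∈ Finset.range l.length, l.getD i 0 = l.sum := by
  induction l with
  | nil => simp
  | cons a t ih =>
    rw [List.length_cons, Finset.sum_range_succ']
    simp only [List.getD_cons_succ, List.getD_cons_zero, List.sum_cons, ih]
    omega

lemma card_cells {lam : List ℕ} (h : IsStrictPartition lam) :
    (cells lam).card = lam.sum := by
  have hrep : cells lam = (Finset.Icc 1 lam.length).biUnion
      (fun i => {i} ×ˢ Finset.Icc i (lam.getD (i - 1) 0 + i - 1)) := by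
    ext ⟨i, j⟩
    simp only [mem_cells, Finset.mem_biUnion, Finset.mem_Icc, Finset.mem_product,
      Finset.mem_singleton]
    constructor
    · rintro ⟨h1, h2, h3, h4⟩; exact ⟨i, ⟨h1, h2⟩, rfl, h3, h4⟩
    · rintro ⟨i', ⟨h1, h2⟩, rfl, h3, h4⟩; exact ⟨h1, h2, h3, h4⟩
  rw [hrep, Finset.card_biUnion]
  · have : ∀ i ∈ Finset.Icc 1 lam.length,
        ({i} ×ˢ Finset.Icc i (lam.getD (i - 1) 0 + i - 1)).card = lam.getD (i - 1) 0 := by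
      intro i hi
      simp only [Finset.mem_Icc] at hi
      have hpos : 0 < lam.getD (i - 1) 0 := by
        apply h.2
        have : i - 1 < lam.length := by omega
        rw [List.getD_eq_getElem lam 0 this]
        exact List.getElem_mem _
      rw [Finset.card_product, Finset.card_singleton, one_mul, Nat.card_Icc]
      omega
    rw [Finset.sum_congr rfl this]
    have himg : Finset.Icc 1 lam.length = (Finset.range lam.length).image (· + 1) := by
      ext x; simp only [Finset.mem_Icc, Finset.mem_image, Finset.mem_range]
      constructor
      · rintro ⟨h1, h2⟩; exact ⟨x - 1, by omega, by omega⟩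
      · rintro ⟨y, hy, rfl⟩; omega
    rw [himg, Finset.sum_image (by intro a _ b _ hab; simp only at hab; omega)]
    simp only [Nat.add_sub_cancel]
    exact sum_getD lam
  · intro a _ b _ hab
    simp only [Finset.disjoint_left, Finset.mem_product, Finset.mem_singleton]
    rintro ⟨x, y⟩ ⟨rfl, -⟩ ⟨rfl, -⟩
    exact hab rfl

end GPaux

namespace GPaux

/-- Validity of a P-tableau (straight shape). -/
abbrev Valid (lam : List ℕ) (n : ℕ) (T : ℕ × ℕ → Finset ℕ) : Prop :=
  IsSSVTP lam [] n T

lemma mem_cells_of_mem {lam : List ℕ} {n : ℕ} {T : ℕ × ℕ → Finset ℕ}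
    (hT : Valid lam n T) {e : ℕ × ℕ} {x : ℕ} (hx : x ∈ T e) : e ∈ cells lam := by
  by_contra hmem
  rw [hT.1.support e hmem] at hx
  exact absurd hx (Finset.notMem_empty x)

/-- Compatibility of letter `d` at cell `c`: all the local constraints involving
`d` placed at `c`, referring to `T` only at cells other than `c`. -/
def Compat (T : ℕ × ℕ → Finset ℕ) (n : ℕ) (c : ℕ × ℕ) (d : ℕ) : Prop :=
  1 ≤ d ∧ d ≤ 2 * n ∧ (c.1 = c.2 → d % 2 = 0) ∧
  (∀ a ∈ T (c.1, c.2 - 1), a ≤ d) ∧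
  (∀ a ∈ T (c.1, c.2 + 1), d ≤ a) ∧
  (∀ a ∈ T (c.1 - 1, c.2), a ≤ d) ∧
  (∀ a ∈ T (c.1 + 1, c.2), d ≤ a) ∧
  (d % 2 = 0 → ∀ i', d ∈ T (i', c.2) → i' = c.1) ∧
  (d % 2 = 1 → ∀ j', d ∈ T (c.1, j') → j' = c.2)

noncomputable def addL (T : ℕ × ℕ → Finset ℕ) (c : ℕ × ℕ) (d : ℕ) :
    ℕ × ℕ → Finset ℕ := Function.update T c (insert d (T c))

noncomputable def remL (T : ℕ × ℕ → Finset ℕ) (c : ℕ × ℕ) (d : ℕ) :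
    ℕ × ℕ → Finset ℕ := Function.update T c ((T c).erase d)

def Addable (lam : List ℕ) (n : ℕ) (T : ℕ × ℕ → Finset ℕ) (c : ℕ × ℕ)
    (d : ℕ) : Prop := d ∉ T c ∧ Valid lam n (addL T c d)

lemma mem_addL {T : ℕ × ℕ → Finset ℕ} {c e : ℕ × ℕ} {d x : ℕ} :
    x ∈ addL T c d e ↔ x ∈ T e ∨ (e = c ∧ x = d) := by
  unfold addL
  rcases eq_or_ne e c with rfl | hne
  · simp only [Function.update_self, Finset.mem_insert]; tauto
  · simp [Function.update_of_ne hne, hne]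

lemma mem_remL {T : ℕ × ℕ → Finset ℕ} {c e : ℕ × ℕ} {d x : ℕ} :
    x ∈ remL T c d e ↔ x ∈ T e ∧ ¬(e = c ∧ x = d) := by
  unfold remL
  rcases eq_or_ne e c with rfl | hne
  · simp [Function.update_self, Finset.mem_erase]; tauto
  · simp [Function.update_of_ne hne, hne]

lemma addL_self {T : ℕ × ℕ → Finset ℕ} {c : ℕ × ℕ} {d : ℕ} :
    addL T c d c = insert d (T c) := by simp [addL]

lemma remL_self {T : ℕ × ℕ → Finset ℕ} {c : ℕ × ℕ} {d : ℕ} :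
    remL T c d c = (T c).erase d := by simp [remL]

lemma compat_congr {T U : ℕ × ℕ → Finset ℕ} {n : ℕ} {c : ℕ × ℕ} {d : ℕ}
    (hc1 : 1 ≤ c.1) (hc2 : 1 ≤ c.2)
    (hTU : ∀ e, e ≠ c → T e = U e) : Compat T n c d ↔ Compat U n c d := by
  have aux : ∀ (T U : ℕ × ℕ → Finset ℕ), (∀ e, e ≠ c → T e = U e) →
      Compat T n c d → Compat U n c d := by
    rintro T U hag ⟨h1, h2, h3, h4, h5, h6, h7, h8, h9⟩
    have e1 : (c.1, c.2 - 1) ≠ c := by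
      intro he; have h := congrArg Prod.snd he; simp only at h; omega
    have e2 : (c.1, c.2 + 1) ≠ c := by
      intro he; have h := congrArg Prod.snd he; simp only at h; omega
    have e3 : (c.1 - 1, c.2) ≠ c := by
      intro he; have h := congrArg Prod.fst he; simp only at h; omega
    have e4 : (c.1 + 1, c.2) ≠ c := by
      intro he; have h := congrArg Prod.fst he; simp only at h; omega
    refine ⟨h1, h2, h3, ?_, ?_, ?_, ?_, ?_, ?_⟩
    · rw [← hag _ e1]; exact h4
    · rw [← hag _ e2]; exact h5
    · rw [← hag _ e3]; exact h6
    · rw [← hag _ e4]; exact h7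
    · intro hpar i' hi'
      rcases eq_or_ne (i', c.2) c with he | he
      · exact congrArg Prod.fst he
      · exact h8 hpar i' (by rw [hag _ he]; exact hi')
    · intro hpar j' hj'
      rcases eq_or_ne (c.1, j') c with he | he
      · exact congrArg Prod.snd he
      · exact h9 hpar j' (by rw [hag _ he]; exact hj')
  exact ⟨aux T U hTU, aux U T (fun e he => (hTU e he).symm)⟩

lemma compat_of_mem {lam : List ℕ} {n : ℕ} {T : ℕ × ℕ → Finset ℕ}
    (hT : Valid lam n T) {c : ℕ × ℕ} (hc : c ∈ cells lam) {a : ℕ}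
    (ha : a ∈ T c) : Compat T n c a := by
  obtain ⟨c1, c2⟩ := c
  have hcc := mem_cells.mp hc
  simp only at hcc
  have hc2 : 1 ≤ c2 := by omega
  refine ⟨(hT.1.inRange _ a ha).1, (hT.1.inRange _ a ha).2, ?_, ?_, ?_, ?_, ?_, ?_, ?_⟩
  · intro he; simp only at he; subst he; exact hT.2 c1 a ha
  · intro x hx
    have hcell : (c1, c2 - 1) ∈ cells lam := mem_cells_of_mem hT hx
    have : c2 - 1 + 1 = c2 := by omega
    exact hT.1.rowWeak c1 (c2 - 1) hcell (by rw [this]; exact hc) x hx a (by rw [this]; exact ha)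
  · intro x hx
    have hcell : (c1, c2 + 1) ∈ cells lam := mem_cells_of_mem hT hx
    exact hT.1.rowWeak c1 c2 hc hcell a ha x hx
  · intro x hx
    have hcell : (c1 - 1, c2) ∈ cells lam := mem_cells_of_mem hT hx
    have : c1 - 1 + 1 = c1 := by omega
    exact hT.1.colWeak (c1 - 1) c2 hcell (by rw [this]; exact hc) x hx a (by rw [this]; exact ha)
  · intro x hx
    have hcell : (c1 + 1, c2) ∈ cells lam := mem_cells_of_mem hT hx
    exact hT.1.colWeak c1 c2 hc hcell a ha x hx
  · intro hpar i' hi'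
    exact hT.1.colOnce a hpar i' c1 c2 hi' ha
  · intro hpar j' hj'
    exact hT.1.rowOnce a hpar c1 j' c2 hj' ha

lemma addable_iff {lam : List ℕ} {n : ℕ} {T : ℕ × ℕ → Finset ℕ}
    (hT : Valid lam n T) {c : ℕ × ℕ} (hc : c ∈ cells lam) {d : ℕ} :
    Addable lam n T c d ↔ d ∉ T c ∧ Compat T n c d := by
  obtain ⟨c1, c2⟩ := c
  have hcc := mem_cells.mp hc
  simp only at hcc
  constructor
  · rintro ⟨hd, hV⟩
    refine ⟨hd, ?_⟩
    have hdmem : d ∈ addL T (c1, c2) d (c1, c2) := mem_addL.mpr (Or.inr ⟨rfl, rfl⟩)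
    refine ⟨(hV.1.inRange _ d hdmem).1, (hV.1.inRange _ d hdmem).2, ?_, ?_, ?_, ?_, ?_, ?_, ?_⟩
    · intro he
      simp only at he; subst he
      exact hV.2 c1 d hdmem
    · intro x hx
      have hcell : (c1, c2 - 1) ∈ cells lam := mem_cells_of_mem hT hx
      have h21 : c2 - 1 + 1 = c2 := by omega
      have hx' : x ∈ addL T (c1, c2) d (c1, c2 - 1) := mem_addL.mpr (Or.inl hx)
      exact hV.1.rowWeak c1 (c2 - 1) hcell (by rw [h21]; exact hc) x hx' d
        (by rw [h21]; exact hdmem)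
    · intro x hx
      have hcell : (c1, c2 + 1) ∈ cells lam := mem_cells_of_mem hT hx
      exact hV.1.rowWeak c1 c2 hc hcell d hdmem x (mem_addL.mpr (Or.inl hx))
    · intro x hx
      have hcell : (c1 - 1, c2) ∈ cells lam := mem_cells_of_mem hT hx
      have h11 : c1 - 1 + 1 = c1 := by omega
      exact hV.1.colWeak (c1 - 1) c2 hcell (by rw [h11]; exact hc) x
        (mem_addL.mpr (Or.inl hx)) d (by rw [h11]; exact hdmem)
    · intro x hx
      have hcell : (c1 + 1, c2) ∈ cells lam := mem_cells_of_mem hT hx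
      exact hV.1.colWeak c1 c2 hc hcell d hdmem x (mem_addL.mpr (Or.inl hx))
    · intro hpar i' hi'
      exact hV.1.colOnce d hpar i' c1 c2 (mem_addL.mpr (Or.inl hi')) hdmem
    · intro hpar j' hj'
      exact hV.1.rowOnce d hpar c1 j' c2 (mem_addL.mpr (Or.inl hj')) hdmem
  · rintro ⟨hd, h1, h2, h3, h4, h5, h6, h7, h8, h9⟩
    refine ⟨hd, ⟨⟨?_, ?_, ?_, ?_, ?_, ?_, ?_⟩, ?_⟩⟩
    · intro e he
      have hne : e ≠ (c1, c2) := by rintro rfl; exact he hc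
      unfold addL
      rw [Function.update_of_ne hne]
      exact hT.1.support e he
    · intro e he
      obtain ⟨x, hx⟩ := hT.1.cellNonempty e he
      exact ⟨x, mem_addL.mpr (Or.inl hx)⟩
    · intro e x hx
      rcases mem_addL.mp hx with hx | ⟨-, rfl⟩
      · exact hT.1.inRange e x hx
      · exact ⟨h1, h2⟩
    · intro i j hij hij1 a ha b hb
      rcases mem_addL.mp ha with ha2 | ⟨hec, heqa⟩
      · rcases mem_addL.mp hb with hb2 | ⟨hec', heqb⟩
        · exact hT.1.rowWeak i j hij hij1 a ha2 b hb2
        · subst heqb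
          rw [Prod.mk.injEq] at hec'
          obtain ⟨h1', h2'⟩ := hec'
          apply h4
          rw [show ((c1 : ℕ), c2 - 1) = (i, j) by rw [h1', ← h2']; simp]
          exact ha2
      · subst heqa
        rw [Prod.mk.injEq] at hec
        obtain ⟨h1', h2'⟩ := hec
        rcases mem_addL.mp hb with hb2 | ⟨hec', heqb⟩
        · apply h5
          rw [show ((c1 : ℕ), c2 + 1) = (i, j + 1) by rw [h1', h2']]
          exact hb2
        · exfalso
          rw [Prod.mk.injEq] at hec'
          obtain ⟨-, h2''⟩ := hec'
          omega
    · intro i j hij hij1 a ha b hb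
      rcases mem_addL.mp ha with ha2 | ⟨hec, heqa⟩
      · rcases mem_addL.mp hb with hb2 | ⟨hec', heqb⟩
        · exact hT.1.colWeak i j hij hij1 a ha2 b hb2
        · subst heqb
          rw [Prod.mk.injEq] at hec'
          obtain ⟨h1', h2'⟩ := hec'
          apply h6
          rw [show ((c1 : ℕ) - 1, c2) = (i, j) by rw [← h1', h2']; simp]
          exact ha2
      · subst heqa
        rw [Prod.mk.injEq] at hec
        obtain ⟨h1', h2'⟩ := hec
        rcases mem_addL.mp hb with hb2 | ⟨hec', heqb⟩
        · apply h7
          rw [show ((c1 : ℕ) + 1, c2) = (i + 1, j) by rw [h1', h2']]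
          exact hb2
        · exfalso
          rw [Prod.mk.injEq] at hec'
          obtain ⟨h1'', -⟩ := hec'
          omega
    · intro a hpar i i' j ha ha'
      rcases mem_addL.mp ha with ha2 | ⟨hec, heqa⟩
      · rcases mem_addL.mp ha' with ha2' | ⟨hec', heqa'⟩
        · exact hT.1.colOnce a hpar i i' j ha2 ha2'
        · rw [Prod.mk.injEq] at hec'
          obtain ⟨h1', h2'⟩ := hec'
          rw [h1']
          subst heqa'
          exact h8 hpar i (by rw [← h2']; exact ha2)
      · rw [Prod.mk.injEq] at hec
        obtain ⟨h1', h2'⟩ := hec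
        rcases mem_addL.mp ha' with ha2' | ⟨hec', heqa'⟩
        · rw [h1']
          subst heqa
          exact (h8 hpar i' (by rw [← h2']; exact ha2')).symm
        · rw [Prod.mk.injEq] at hec'
          obtain ⟨h1'', h2''⟩ := hec'
          rw [h1', h1'']
    · intro a hpar i j j' ha ha'
      rcases mem_addL.mp ha with ha2 | ⟨hec, heqa⟩
      · rcases mem_addL.mp ha' with ha2' | ⟨hec', heqa'⟩
        · exact hT.1.rowOnce a hpar i j j' ha2 ha2'
        · rw [Prod.mk.injEq] at hec'
          obtain ⟨h1', h2'⟩ := hec'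
          rw [h2']
          subst heqa'
          exact h9 hpar j (by rw [← h1']; exact ha2)
      · rw [Prod.mk.injEq] at hec
        obtain ⟨h1', h2'⟩ := hec
        rcases mem_addL.mp ha' with ha2' | ⟨hec', heqa'⟩
        · rw [h2']
          subst heqa
          exact (h9 hpar j' (by rw [← h1']; exact ha2')).symm
        · rw [Prod.mk.injEq] at hec'
          obtain ⟨h1'', h2''⟩ := hec'
          rw [h2', h2'']
    · intro i x hx
      rcases mem_addL.mp hx with hx2 | ⟨hec, heqx⟩
      · exact hT.2 i x hx2
      · subst heqx
        rw [Prod.mk.injEq] at hec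
        obtain ⟨h1', h2'⟩ := hec
        exact h3 (by omega)

lemma remove_valid {lam : List ℕ} {n : ℕ} {T : ℕ × ℕ → Finset ℕ}
    (hT : Valid lam n T) {c : ℕ × ℕ} {a : ℕ}
    (hne : c ∈ cells lam → ((T c).erase a).Nonempty) :
    Valid lam n (remL T c a) := by
  have hsub : ∀ e x, x ∈ remL T c a e → x ∈ T e := fun e x hx => (mem_remL.mp hx).1
  refine ⟨⟨?_, ?_, ?_, ?_, ?_, ?_, ?_⟩, ?_⟩
  · intro e he
    rcases eq_or_ne e c with rfl | hne'
    · rw [remL_self, hT.1.support e he]; simp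
    · unfold remL; rw [Function.update_of_ne hne']; exact hT.1.support e he
  · intro e he
    rcases eq_or_ne e c with rfl | hne'
    · rw [remL_self]; exact hne he
    · unfold remL; rw [Function.update_of_ne hne']; exact hT.1.cellNonempty e he
  · exact fun e x hx => hT.1.inRange e x (hsub e x hx)
  · exact fun i j h1 h2 x hx y hy =>
      hT.1.rowWeak i j h1 h2 x (hsub _ x hx) y (hsub _ y hy)
  · exact fun i j h1 h2 x hx y hy =>
      hT.1.colWeak i j h1 h2 x (hsub _ x hx) y (hsub _ y hy)
  · exact fun x hpar i i' j h1 h2 =>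
      hT.1.colOnce x hpar i i' j (hsub _ x h1) (hsub _ x h2)
  · exact fun x hpar i j j' h1 h2 =>
      hT.1.rowOnce x hpar i j j' (hsub _ x h1) (hsub _ x h2)
  · exact fun i x hx => hT.2 i x (hsub _ x hx)

lemma row_chain {lam : List ℕ} {n : ℕ} {T : ℕ × ℕ → Finset ℕ}
    (hT : Valid lam n T) {i j1 j2 a b : ℕ} (h2 : (i, j2) ∈ cells lam)
    (hj : j1 < j2) (ha : a ∈ T (i, j1)) (hb : b ∈ T (i, j2)) : a ≤ b := by
  have h1 : (i, j1) ∈ cells lam := mem_cells_of_mem hT ha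
  have hij1 : i ≤ j1 := by have := mem_cells.mp h1; simp only at this; omega
  have main : ∀ j2, (i, j2) ∈ cells lam → j1 < j2 → ∀ b ∈ T (i, j2), a ≤ b := by
    intro j2
    induction j2 with
    | zero => intro _ hlt; omega
    | succ j2 ih =>
      intro h2 hj b hb
      rcases Nat.eq_or_lt_of_le (Nat.lt_succ_iff.mp hj) with rfl | hj'
      · exact hT.1.rowWeak i j1 h1 h2 a ha b hb
      · have hmem : (i, j2) ∈ cells lam := row_contig h2 (by omega) (by omega)
        obtain ⟨x, hx⟩ := hT.1.cellNonempty _ hmem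
        exact le_trans (ih hmem hj' x hx) (hT.1.rowWeak i j2 hmem h2 x hx b hb)
  exact main j2 h2 hj b hb

lemma col_chain {lam : List ℕ} {n : ℕ} {T : ℕ × ℕ → Finset ℕ}
    (hch : lam.Chain' (· > ·)) (hT : Valid lam n T) {i1 i2 j a b : ℕ}
    (h2 : (i2, j) ∈ cells lam) (hi : i1 < i2) (ha : a ∈ T (i1, j))
    (hb : b ∈ T (i2, j)) : a ≤ b := by
  have h1 : (i1, j) ∈ cells lam := mem_cells_of_mem hT ha
  have main : ∀ i2, (i2, j) ∈ cells lam → i1 < i2 → ∀ b ∈ T (i2, j), a ≤ b := by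
    intro i2
    induction i2 with
    | zero => intro _ hlt; omega
    | succ i2 ih =>
      intro h2 hi b hb
      rcases Nat.eq_or_lt_of_le (Nat.lt_succ_iff.mp hi) with rfl | hi'
      · exact hT.1.colWeak i1 j h1 h2 a ha b hb
      · have hmem : (i2, j) ∈ cells lam := col_contig hch h1 h2 (by omega) (by omega)
        obtain ⟨x, hx⟩ := hT.1.cellNonempty _ hmem
        exact le_trans (ih hmem hi' x hx) (hT.1.colWeak i2 j hmem h2 x hx b hb)
  exact main i2 h2 hi b hb

end GPaux

namespace GPaux

open Finset
open scoped Classical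

noncomputable def candidates (lam : List ℕ) (n : ℕ) : Finset (ℕ × ℕ → Finset ℕ) :=
  ((cells lam).pi (fun _ => (Finset.range (2 * n + 1)).powerset)).image
    (fun f c => if h : c ∈ cells lam then f c h else ∅)

lemma valid_mem_candidates {lam : List ℕ} {n : ℕ} {T : ℕ × ℕ → Finset ℕ}
    (hT : Valid lam n T) : T ∈ candidates lam n := by
  rw [candidates, Finset.mem_image]
  refine ⟨fun c _ => T c, ?_, ?_⟩
  · rw [Finset.mem_pi]
    intro c hc
    rw [Finset.mem_powerset]
    intro x hx
    rw [Finset.mem_range]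
    have := hT.1.inRange c x hx; omega
  · funext c
    by_cases hc : c ∈ cells lam
    · simp [hc]
    · simp [hc, hT.1.support c hc]

noncomputable def Sfin (lam : List ℕ) (n : ℕ) : Finset (ℕ × ℕ → Finset ℕ) :=
  (candidates lam n).filter (fun T => Valid lam n T)

lemma mem_Sfin {lam : List ℕ} {n : ℕ} {T : ℕ × ℕ → Finset ℕ} :
    T ∈ Sfin lam n ↔ Valid lam n T :=
  ⟨fun h => (Finset.mem_filter.mp h).2,
   fun h => Finset.mem_filter.mpr ⟨valid_mem_candidates h, h⟩⟩

def keyK (lam : List ℕ) : ℕ := lam.length + lam.foldr max 0 + 2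

def keyv (lam : List ℕ) (c : ℕ × ℕ) : ℕ :=
  (lam.length - c.1) * keyK lam + (keyK lam - c.2)

lemma key_arith {K L i i' j j' : ℕ} (hi : 1 ≤ i) (hi' : 1 ≤ i')
    (hiL : i ≤ L) (hi'L : i' ≤ L) (hj : 1 ≤ j) (hj' : 1 ≤ j')
    (hjK : j + 2 ≤ K) (hj'K : j' + 2 ≤ K) :
    ((L - i) * K + (K - j) < (L - i') * K + (K - j')) ↔
      (i' < i ∨ (i' = i ∧ j' < j)) := by
  constructor
  · intro h
    rcases lt_trichotomy i' i with h1 | h1 | h1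
    · exact Or.inl h1
    · subst h1; right; exact ⟨rfl, by omega⟩
    · exfalso
      have hm : (L - i' + 1) * K ≤ (L - i) * K := by
        apply Nat.mul_le_mul_right
        omega
      rw [add_mul, one_mul] at hm
      omega
  · rintro (h1 | ⟨rfl, h2⟩)
    · have hm : (L - i + 1) * K ≤ (L - i') * K := by
        apply Nat.mul_le_mul_right
        omega
      rw [add_mul, one_mul] at hm
      omega
    · omega

lemma cell_bounds {lam : List ℕ} {c : ℕ × ℕ} (hc : c ∈ cells lam) :
    1 ≤ c.1 ∧ c.1 ≤ lam.length ∧ 1 ≤ c.2 ∧ c.2 + 2 ≤ keyK lam := by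
  have h := mem_cells.mp hc
  have hfr := getD_le_foldr lam (c.1 - 1)
  unfold keyK
  omega

lemma keyv_lt_iff {lam : List ℕ} {c c' : ℕ × ℕ} (hc : c ∈ cells lam)
    (hc' : c' ∈ cells lam) :
    keyv lam c < keyv lam c' ↔ (c'.1 < c.1 ∨ (c'.1 = c.1 ∧ c'.2 < c.2)) := by
  obtain ⟨b1, b2, b3, b4⟩ := cell_bounds hc
  obtain ⟨b1', b2', b3', b4'⟩ := cell_bounds hc'
  exact key_arith b1 b1' b2 b2' b3 b3' b4 b4'

lemma keyv_inj {lam : List ℕ} {c c' : ℕ × ℕ} (hc : c ∈ cells lam)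
    (hc' : c' ∈ cells lam) (h : keyv lam c = keyv lam c') : c = c' := by
  by_contra hne
  have h1 : c.1 ≠ c'.1 ∨ (c.1 = c'.1 ∧ c.2 ≠ c'.2) := by
    by_contra hcon
    push_neg at hcon
    exact hne (Prod.ext hcon.1 ((hcon.2 hcon.1)))
  have hlt := keyv_lt_iff hc hc'
  have hlt' := keyv_lt_iff hc' hc
  rcases h1 with h1 | ⟨h1, h2⟩
  · rcases Nat.lt_or_ge c.1 c'.1 with h3 | h3
    · have := hlt'.mpr (Or.inl h3); omega
    · have := hlt.mpr (Or.inl (by omega)); omega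
  · rcases Nat.lt_or_ge c.2 c'.2 with h3 | h3
    · have := hlt'.mpr (Or.inr ⟨h1, h3⟩); omega
    · have := hlt.mpr (Or.inr ⟨h1.symm, by omega⟩); omega

def Fixed (lam : List ℕ) (n : ℕ) (T : ℕ × ℕ → Finset ℕ) (c : ℕ × ℕ) : Prop :=
  (T c).card = 1 ∧ ∀ b, Addable lam n T c b → ∀ a ∈ T c, b ≤ a

noncomputable def NFset (lam : List ℕ) (n : ℕ) (T : ℕ × ℕ → Finset ℕ) :
    Finset (ℕ × ℕ) := (cells lam).filter (fun c => ¬ Fixed lam n T c)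

noncomputable def firstNF (lam : List ℕ) (n : ℕ) (T : ℕ × ℕ → Finset ℕ)
    (h : (NFset lam n T).Nonempty) : ℕ × ℕ :=
  Classical.choose (Finset.exists_min_image (NFset lam n T) (keyv lam) h)

lemma firstNF_spec (lam : List ℕ) (n : ℕ) (T : ℕ × ℕ → Finset ℕ)
    (h : (NFset lam n T).Nonempty) :
    firstNF lam n T h ∈ NFset lam n T ∧
      ∀ c' ∈ NFset lam n T, keyv lam (firstNF lam n T h) ≤ keyv lam c' := by
  have := Classical.choose_spec
    (Finset.exists_min_image (NFset lam n T) (keyv lam) h)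
  exact ⟨this.1, this.2⟩

lemma NFset_subset {lam : List ℕ} {n : ℕ} {T : ℕ × ℕ → Finset ℕ} :
    NFset lam n T ⊆ cells lam := Finset.filter_subset _ _

lemma firstNF_eq {lam : List ℕ} {n : ℕ} {T : ℕ × ℕ → Finset ℕ}
    (h : (NFset lam n T).Nonempty) {c : ℕ × ℕ} (hc : c ∈ NFset lam n T)
    (hmin : ∀ c' ∈ NFset lam n T, keyv lam c ≤ keyv lam c') :
    firstNF lam n T h = c := by
  obtain ⟨h1, h2⟩ := firstNF_spec lam n T h
  exact keyv_inj (NFset_subset h1) (NFset_subset hc)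
    (le_antisymm (h2 c hc) (hmin _ h1))

noncomputable def bigSet (lam : List ℕ) (n : ℕ) (T : ℕ × ℕ → Finset ℕ)
    (c : ℕ × ℕ) : Finset ℕ :=
  (Finset.range (2 * n + 1)).filter
    (fun b => Addable lam n T c b ∧ ∀ a ∈ T c, a < b)

lemma mem_bigSet {lam : List ℕ} {n : ℕ} {T : ℕ × ℕ → Finset ℕ} {c : ℕ × ℕ}
    {b : ℕ} : b ∈ bigSet lam n T c ↔
      Addable lam n T c b ∧ ∀ a ∈ T c, a < b := by
  rw [bigSet, Finset.mem_filter, Finset.mem_range]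
  constructor
  · tauto
  · intro hb
    refine ⟨?_, hb⟩
    have hmem : b ∈ addL T c b c := mem_addL.mpr (Or.inr ⟨rfl, rfl⟩)
    have := hb.1.2.1.inRange c b hmem
    omega

noncomputable def tog (lam : List ℕ) (n : ℕ) (T : ℕ × ℕ → Finset ℕ)
    (c : ℕ × ℕ) : ℕ × ℕ → Finset ℕ :=
  if h : (bigSet lam n T c).Nonempty then addL T c ((bigSet lam n T c).max' h)
  else remL T c ((T c).sup id)

noncomputable def Phi (lam : List ℕ) (n : ℕ) (T : ℕ × ℕ → Finset ℕ) :
    ℕ × ℕ → Finset ℕ :=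
  if h : (NFset lam n T).Nonempty then tog lam n T (firstNF lam n T h) else T

lemma sup_id_eq_max' {X : Finset ℕ} (h : X.Nonempty) : X.sup id = X.max' h := by
  rw [Finset.max'_eq_sup', Finset.sup'_eq_sup]

lemma sup_id_mem {X : Finset ℕ} (h : X.Nonempty) : X.sup id ∈ X := by
  rw [sup_id_eq_max' h]; exact X.max'_mem h

lemma le_sup_id {X : Finset ℕ} {a : ℕ} (ha : a ∈ X) : a ≤ X.sup id :=
  Finset.le_sup (f := id) ha

/-- Key preservation lemma: modifying a scan-later cell `c` preserves
fixedness of a scan-earlier cell `c'`. -/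
lemma fixed_mod {lam : List ℕ} {n : ℕ} (hch : lam.Chain' (· > ·))
    {T U : ℕ × ℕ → Finset ℕ} (hT : Valid lam n T) (hU : Valid lam n U)
    {c c' : ℕ × ℕ} (hc : c ∈ cells lam) (hc' : c' ∈ cells lam)
    (hlt : c.1 < c'.1 ∨ (c.1 = c'.1 ∧ c.2 < c'.2))
    (hag : ∀ e, e ≠ c → T e = U e) :
    Fixed lam n T c' → Fixed lam n U c' := by
  rintro ⟨hcard, hmax⟩
  have hnec : c' ≠ c := by
    rintro rfl; rcases hlt with h | ⟨-, h⟩ <;> omega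
  have hTc' : T c' = U c' := hag c' hnec
  refine ⟨by rw [← hTc']; exact hcard, ?_⟩
  intro b hbAdd a' ha'
  by_contra hble
  push_neg at hble
  have ha'T : a' ∈ T c' := by rw [hTc']; exact ha'
  obtain ⟨hbU, hcomp⟩ := (addable_iff hU hc').mp hbAdd
  obtain ⟨k1, k2, k3, k4, k5, k6, k7, k8, k9⟩ := hcomp
  have hcc' := mem_cells.mp hc'
  -- derive Compat T c' b
  have hcompT : Compat T n c' b := by
    refine ⟨k1, k2, k3, ?_, ?_, ?_, ?_, ?_, ?_⟩
    · -- left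
      intro x hx
      have hcell : (c'.1, c'.2 - 1) ∈ cells lam := mem_cells_of_mem hT hx
      have h21 : c'.2 - 1 + 1 = c'.2 := by
        have := mem_cells.mp hcell; omega
      have : x ≤ a' := hT.1.rowWeak c'.1 (c'.2 - 1) hcell
        (by rw [h21]; exact hc') x hx a' (by rw [h21]; exact ha'T)
      omega
    · -- right : cell differs from c
      intro x hx
      apply k5
      rw [← hag _ (by
        intro he
        rcases hlt with h | ⟨h, h2⟩
        · have := congrArg Prod.fst he; simp only at this; omega
        · have := congrArg Prod.snd he; simp only at this; omega)]
      exact hx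
    · -- up
      intro x hx
      have hcell : (c'.1 - 1, c'.2) ∈ cells lam := mem_cells_of_mem hT hx
      have h11 : c'.1 - 1 + 1 = c'.1 := by
        have := mem_cells.mp hcell
        have := mem_cells.mp hc'
        omega
      have : x ≤ a' := hT.1.colWeak (c'.1 - 1) c'.2 hcell
        (by rw [h11]; exact hc') x hx a' (by rw [h11]; exact ha'T)
      omega
    · -- down: cell differs from c
      intro x hx
      apply k7
      rw [← hag _ (by
        intro he
        have := congrArg Prod.fst he; simp only at this
        rcases hlt with h | ⟨h, h2⟩ <;> omega)]
      exact hx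
    · -- col once
      intro hpar i' hi'
      rcases eq_or_ne (i', c'.2) c with he | he
      · exfalso
        -- c is in the same column, strictly above c'
        have he1 := congrArg Prod.fst he
        have he2 := congrArg Prod.snd he
        simp only at he1 he2
        have hi'lt : i' < c'.1 := by
          rcases hlt with h | ⟨h, h2⟩
          · omega
          · omega
        have : b ≤ a' := col_chain hch hT hc' hi'lt hi' ha'T
        omega
      · exact k8 hpar i' (by rw [hag _ he] at hi'; exact hi')
    · -- row once
      intro hpar j' hj'
      rcases eq_or_ne (c'.1, j') c with he | he
      · exfalso
        have he1 := congrArg Prod.fst he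
        have he2 := congrArg Prod.snd he
        simp only at he1 he2
        have hj'lt : j' < c'.2 := by
          rcases hlt with h | ⟨h, h2⟩ <;> omega
        have : b ≤ a' := row_chain hT hc' hj'lt hj' ha'T
        omega
      · exact k9 hpar j' (by rw [hag _ he] at hj'; exact hj')
  have hAddT : Addable lam n T c' b :=
    (addable_iff hT hc').mpr ⟨by rw [hTc']; exact hbU, hcompT⟩
  have := hmax b hAddT a' ha'T
  omega

end GPaux

namespace GPaux

open Finset
open scoped Classical

lemma tabSize_update {lam : List ℕ} {T : ℕ × ℕ → Finset ℕ} {X : Finset ℕ}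
    {c : ℕ × ℕ} (hc : c ∈ cells lam) :
    tabSize lam [] (Function.update T c X) + (T c).card =
      tabSize lam [] T + X.card := by
  unfold tabSize
  rw [Finset.sum_eq_sum_sdiff_singleton_add hc, Finset.sum_eq_sum_sdiff_singleton_add hc
    (fun e => (T e).card)]
  have hcong : ∀ e ∈ cells lam \ {c},
      (Function.update T c X e).card = (T e).card := by
    intro e he
    rw [Finset.mem_sdiff, Finset.mem_singleton] at he
    rw [Function.update_of_ne he.2]
  rw [Finset.sum_congr rfl hcong, Function.update_self]
  omega

lemma card_ge_two_of_nf {lam : List ℕ} {n : ℕ} {T : ℕ × ℕ → Finset ℕ}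
    {c : ℕ × ℕ} (hT : Valid lam n T) (hc : c ∈ cells lam)
    (hnf : ¬ Fixed lam n T c) (hbig : ¬ (bigSet lam n T c).Nonempty) :
    2 ≤ (T c).card := by
  have hne : (T c).Nonempty := hT.1.cellNonempty c hc
  rcases Nat.lt_or_ge (T c).card 2 with hlt | hge
  · exfalso
    have hcard1 : (T c).card = 1 := by
      have := Finset.card_pos.mpr hne; omega
    apply hnf
    refine ⟨hcard1, ?_⟩
    intro b hb a ha
    by_contra hba
    push_neg at hba
    apply hbig
    refine ⟨b, mem_bigSet.mpr ⟨hb, ?_⟩⟩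
    intro x hx
    obtain ⟨y, hy⟩ := Finset.card_eq_one.mp hcard1
    rw [hy, Finset.mem_singleton] at hx ha
    rw [hx, ← ha]
    exact hba
  · exact hge

lemma tog_main {lam : List ℕ} {n : ℕ} (hch : lam.Chain' (· > ·))
    {T : ℕ × ℕ → Finset ℕ} (hT : Valid lam n T)
    (h : (NFset lam n T).Nonempty) :
    Valid lam n (tog lam n T (firstNF lam n T h)) ∧
    firstNF lam n T h ∈ NFset lam n (tog lam n T (firstNF lam n T h)) ∧
    (∀ c'' ∈ NFset lam n (tog lam n T (firstNF lam n T h)),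
      keyv lam (firstNF lam n T h) ≤ keyv lam c'') ∧
    tog lam n (tog lam n T (firstNF lam n T h)) (firstNF lam n T h) = T ∧
    (tabSize lam [] (tog lam n T (firstNF lam n T h)) = tabSize lam [] T + 1 ∨
      tabSize lam [] T = tabSize lam [] (tog lam n T (firstNF lam n T h)) + 1) := by
  obtain ⟨hcNF, hmin⟩ := firstNF_spec lam n T h
  set c := firstNF lam n T h with hcdef
  have hc : c ∈ cells lam := NFset_subset hcNF
  have hnf : ¬ Fixed lam n T c := (Finset.mem_filter.mp hcNF).2
  have hne : (T c).Nonempty := hT.1.cellNonempty c hc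
  obtain ⟨cb1, cb2, cb3, cb4⟩ := cell_bounds hc
  by_cases hbig : (bigSet lam n T c).Nonempty
  · -- ADD case
    set b := (bigSet lam n T c).max' hbig with hbdef
    have hbmem : b ∈ bigSet lam n T c := Finset.max'_mem _ hbig
    obtain ⟨⟨hbnotin, hbV⟩, hgt⟩ := mem_bigSet.mp hbmem
    have htog : tog lam n T c = addL T c b := by rw [tog, dif_pos hbig]
    set U := addL T c b with hUdef
    have hU : Valid lam n U := hbV
    have hag : ∀ e, e ≠ c → T e = U e := by
      intro e he
      rw [hUdef, addL, Function.update_of_ne he]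
    have hUc : U c = insert b (T c) := addL_self
    have hUcard : (U c).card = (T c).card + 1 := by
      rw [hUc, Finset.card_insert_of_notMem hbnotin]
    have hearlier : ∀ c'' ∈ cells lam, keyv lam c'' < keyv lam c →
        Fixed lam n U c'' := by
      intro c'' hc'' hklt
      have hFix : Fixed lam n T c'' := by
        by_contra hnf'
        have hm : c'' ∈ NFset lam n T := Finset.mem_filter.mpr ⟨hc'', hnf'⟩
        have := hmin c'' hm
        omega
      exact fixed_mod hch hT hU hc hc'' ((keyv_lt_iff hc'' hc).mp hklt) hag hFix
    have hcNFU : c ∈ NFset lam n U := by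
      refine Finset.mem_filter.mpr ⟨hc, ?_⟩
      rintro ⟨hcard, -⟩
      have := Finset.card_pos.mpr hne
      omega
    have hminU : ∀ c'' ∈ NFset lam n U, keyv lam c ≤ keyv lam c'' := by
      intro c'' hc''
      by_contra hlt
      push_neg at hlt
      have := hearlier c'' (NFset_subset hc'') hlt
      exact (Finset.mem_filter.mp hc'').2 this
    have hbigU : ¬ (bigSet lam n U c).Nonempty := by
      rintro ⟨d, hd⟩
      obtain ⟨hdAdd, hdgt⟩ := mem_bigSet.mp hd
      have hdb : b < d := hdgt b (by rw [hUc]; exact Finset.mem_insert_self b _)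
      obtain ⟨hdnotinU, hdcomp⟩ := (addable_iff hU hc).mp hdAdd
      have hdnotinT : d ∉ T c := fun hmem =>
        hdnotinU (by rw [hUc]; exact Finset.mem_insert_of_mem hmem)
      have hdcompT : Compat T n c d :=
        (compat_congr cb1 cb3 (fun e he => hag e he)).mpr hdcomp
      have hdAddT : Addable lam n T c d := (addable_iff hT hc).mpr ⟨hdnotinT, hdcompT⟩
      have hdbigT : d ∈ bigSet lam n T c := mem_bigSet.mpr
        ⟨hdAddT, fun a ha => lt_trans (hgt a ha) hdb⟩
      have := Finset.le_max' _ d hdbigT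
      omega
    have htogU : tog lam n U c = T := by
      rw [tog, dif_neg hbigU]
      have hsup : (U c).sup id = b := by
        rw [hUc, Finset.sup_insert]
        have : (T c).sup id ≤ b := le_of_lt (hgt _ (sup_id_mem hne))
        simp only [id]
        exact sup_eq_left.mpr this
      rw [hsup]
      funext e
      rcases eq_or_ne e c with rfl | hee
      · rw [remL_self, hUc, Finset.erase_insert hbnotin]
      · rw [remL, Function.update_of_ne hee, ← hag e hee]
    have hts : tabSize lam [] U + (T c).card =
        tabSize lam [] T + (insert b (T c)).card := tabSize_update hc
    have hcardins : (insert b (T c)).card = (T c).card + 1 :=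
      Finset.card_insert_of_notMem hbnotin
    rw [htog]
    exact ⟨hU, hcNFU, hminU, htogU, Or.inl (by omega)⟩
  · -- REMOVE case
    have hcard2 : 2 ≤ (T c).card := card_ge_two_of_nf hT hc hnf hbig
    set m := (T c).sup id with hmdef
    have hmmem : m ∈ T c := sup_id_mem hne
    have htog : tog lam n T c = remL T c m := by rw [tog, dif_neg hbig]
    set U := remL T c m with hUdef
    have hUc : U c = (T c).erase m := remL_self
    have hU : Valid lam n U := by
      apply remove_valid hT
      intro _
      rw [← Finset.card_pos, Finset.card_erase_of_mem hmmem]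
      omega
    have hag : ∀ e, e ≠ c → T e = U e := by
      intro e he
      rw [hUdef, remL, Function.update_of_ne he]
    have hUcard : (U c).card + 1 = (T c).card := by
      rw [hUc, Finset.card_erase_of_mem hmmem]
      omega
    have hearlier : ∀ c'' ∈ cells lam, keyv lam c'' < keyv lam c →
        Fixed lam n U c'' := by
      intro c'' hc'' hklt
      have hFix : Fixed lam n T c'' := by
        by_contra hnf'
        have hm : c'' ∈ NFset lam n T := Finset.mem_filter.mpr ⟨hc'', hnf'⟩
        have := hmin c'' hm
        omega
      exact fixed_mod hch hT hU hc hc'' ((keyv_lt_iff hc'' hc).mp hklt) hag hFix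
    have hmAddU : Addable lam n U c m := by
      rw [addable_iff hU hc]
      refine ⟨by rw [hUc]; exact Finset.notMem_erase m _, ?_⟩
      exact (compat_congr cb1 cb3 (fun e he => hag e he)).mp (compat_of_mem hT hc hmmem)
    have hUlt : ∀ a ∈ U c, a < m := by
      intro a ha
      rw [hUc, Finset.mem_erase] at ha
      have := le_sup_id ha.2
      omega
    have hUne : (U c).Nonempty := hU.1.cellNonempty c hc
    have hcNFU : c ∈ NFset lam n U := by
      refine Finset.mem_filter.mpr ⟨hc, ?_⟩
      rintro ⟨-, hmax⟩
      obtain ⟨a0, ha0⟩ := hUne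
      have h1 := hmax m hmAddU a0 ha0
      have h2 := hUlt a0 ha0
      omega
    have hminU : ∀ c'' ∈ NFset lam n U, keyv lam c ≤ keyv lam c'' := by
      intro c'' hc''
      by_contra hlt
      push_neg at hlt
      have := hearlier c'' (NFset_subset hc'') hlt
      exact (Finset.mem_filter.mp hc'').2 this
    have hmbigU : m ∈ bigSet lam n U c := mem_bigSet.mpr ⟨hmAddU, hUlt⟩
    have hbigU : (bigSet lam n U c).Nonempty := ⟨m, hmbigU⟩
    have hmaxU : (bigSet lam n U c).max' hbigU = m := by
      apply le_antisymm
      · by_contra hglt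
        push_neg at hglt
        set d := (bigSet lam n U c).max' hbigU with hddef
        have hdmem := Finset.max'_mem _ hbigU
        obtain ⟨hdAdd, hdgt⟩ := mem_bigSet.mp hdmem
        obtain ⟨hdnotinU, hdcomp⟩ := (addable_iff hU hc).mp hdAdd
        have hdnotinT : d ∉ T c := by
          intro hmem
          have := le_sup_id hmem
          omega
        have hdcompT : Compat T n c d :=
          (compat_congr cb1 cb3 (fun e he => hag e he)).mpr hdcomp
        have hdAddT : Addable lam n T c d := (addable_iff hT hc).mpr ⟨hdnotinT, hdcompT⟩
        have : d ∈ bigSet lam n T c := mem_bigSet.mpr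
          ⟨hdAddT, fun a ha => lt_of_le_of_lt (le_sup_id ha) hglt⟩
        exact hbig ⟨d, this⟩
      · exact Finset.le_max' _ m hmbigU
    have htogU : tog lam n U c = T := by
      rw [tog, dif_pos hbigU, hmaxU]
      funext e
      rcases eq_or_ne e c with rfl | hee
      · rw [addL_self, hUc, Finset.insert_erase hmmem]
      · rw [addL, Function.update_of_ne hee, ← hag e hee]
    have hts : tabSize lam [] U + (T c).card =
        tabSize lam [] T + ((T c).erase m).card := tabSize_update hc
    have hcarder : ((T c).erase m).card + 1 = (T c).card := by
      rw [Finset.card_erase_of_mem hmmem]; omega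
    rw [htog]
    exact ⟨hU, hcNFU, hminU, htogU, Or.inr (by omega)⟩

lemma Phi_spec {lam : List ℕ} {n : ℕ} (hch : lam.Chain' (· > ·))
    {T : ℕ × ℕ → Finset ℕ} (hT : Valid lam n T)
    (h : (NFset lam n T).Nonempty) :
    Valid lam n (Phi lam n T) ∧ (NFset lam n (Phi lam n T)).Nonempty ∧
    Phi lam n (Phi lam n T) = T ∧
    (tabSize lam [] (Phi lam n T) = tabSize lam [] T + 1 ∨
      tabSize lam [] T = tabSize lam [] (Phi lam n T) + 1) := by
  obtain ⟨hU, hcNFU, hminU, htogU, hts⟩ := tog_main hch hT h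
  have hPhi : Phi lam n T = tog lam n T (firstNF lam n T h) := by
    rw [Phi, dif_pos h]
  rw [← hPhi] at hU hcNFU hminU htogU hts
  have hNFU : (NFset lam n (Phi lam n T)).Nonempty := ⟨_, hcNFU⟩
  refine ⟨hU, hNFU, ?_, hts⟩
  rw [Phi, dif_pos hNFU]
  rw [firstNF_eq hNFU hcNFU hminU]
  rw [hPhi] at htogU ⊢
  exact htogU

end GPaux

namespace GPaux

open Finset
open scoped Classical

lemma fixed_le {lam : List ℕ} {n : ℕ} (hch : lam.Chain' (· > ·))
    {T U : ℕ × ℕ → Finset ℕ} (hT : Valid lam n T) (hU : Valid lam n U)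
    {c : ℕ × ℕ} (hc : c ∈ cells lam) (hTfix : Fixed lam n T c)
    (IH : ∀ d ∈ cells lam, keyv lam d < keyv lam c → T d = U d)
    {a a' : ℕ} (haT : T c = {a}) (haU : U c = {a'}) : a' ≤ a := by
  by_contra hlt
  push_neg at hlt
  have hmemU : a' ∈ U c := by rw [haU]; exact Finset.mem_singleton_self a'
  have hmemTa : a ∈ T c := by rw [haT]; exact Finset.mem_singleton_self a
  obtain ⟨cb1, cb2, cb3, cb4⟩ := cell_bounds hc
  obtain ⟨k1, k2, k3, k4, k5, k6, k7, k8, k9⟩ := compat_of_mem hU hc hmemU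
  have hcompT : Compat T n c a' := by
    refine ⟨k1, k2, k3, ?_, ?_, ?_, ?_, ?_, ?_⟩
    · -- left
      intro x hx
      have hcell : (c.1, c.2 - 1) ∈ cells lam := mem_cells_of_mem hT hx
      have h21 : c.2 - 1 + 1 = c.2 := by omega
      have : x ≤ a := hT.1.rowWeak c.1 (c.2 - 1) hcell
        (by rw [h21]; exact hc) x hx a (by rw [h21]; exact hmemTa)
      omega
    · -- right
      intro x hx
      have hcell : (c.1, c.2 + 1) ∈ cells lam := mem_cells_of_mem hT hx
      have hkey : keyv lam (c.1, c.2 + 1) < keyv lam c := by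
        rw [keyv_lt_iff hcell hc]
        right; exact ⟨rfl, by omega⟩
      apply k5
      rw [← IH _ hcell hkey]
      exact hx
    · -- up
      intro x hx
      have hcell : (c.1 - 1, c.2) ∈ cells lam := mem_cells_of_mem hT hx
      have h11 : c.1 - 1 + 1 = c.1 := by omega
      have : x ≤ a := hT.1.colWeak (c.1 - 1) c.2 hcell
        (by rw [h11]; exact hc) x hx a (by rw [h11]; exact hmemTa)
      omega
    · -- down
      intro x hx
      have hcell : (c.1 + 1, c.2) ∈ cells lam := mem_cells_of_mem hT hx
      have hkey : keyv lam (c.1 + 1, c.2) < keyv lam c := by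
        rw [keyv_lt_iff hcell hc]
        left; omega
      apply k7
      rw [← IH _ hcell hkey]
      exact hx
    · -- col once
      intro hpar i' hi'
      have hcell : (i', c.2) ∈ cells lam := mem_cells_of_mem hT hi'
      rcases lt_trichotomy i' c.1 with hi | hi | hi
      · exfalso
        have : a' ≤ a := by
          have hcc : ((c.1 : ℕ), c.2) ∈ cells lam := by
            rcases c with ⟨x, y⟩; exact hc
          have := col_chain hch hT hcc hi hi' (by
            rcases c with ⟨x, y⟩; exact hmemTa)
          exact this
        omega
      · exact hi
      · have hkey : keyv lam (i', c.2) < keyv lam c := by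
          rw [keyv_lt_iff hcell hc]
          left; omega
        have hi'U : a' ∈ U (i', c.2) := by rw [← IH _ hcell hkey]; exact hi'
        have := hU.1.colOnce a' hpar i' c.1 c.2 hi'U (by
          rcases c with ⟨x, y⟩; exact hmemU)
        exact this
    · -- row once
      intro hpar j' hj'
      have hcell : (c.1, j') ∈ cells lam := mem_cells_of_mem hT hj'
      rcases lt_trichotomy j' c.2 with hj | hj | hj
      · exfalso
        have : a' ≤ a := by
          have hcc : ((c.1 : ℕ), c.2) ∈ cells lam := by
            rcases c with ⟨x, y⟩; exact hc
          exact row_chain hT hcc hj hj' (by rcases c with ⟨x, y⟩; exact hmemTa)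
        omega
      · exact hj
      · have hkey : keyv lam (c.1, j') < keyv lam c := by
          rw [keyv_lt_iff hcell hc]
          right; exact ⟨rfl, by omega⟩
        have hj'U : a' ∈ U (c.1, j') := by rw [← IH _ hcell hkey]; exact hj'
        exact hU.1.rowOnce a' hpar c.1 j' c.2 hj'U (by
          rcases c with ⟨x, y⟩; exact hmemU)
  have hAdd : Addable lam n T c a' := (addable_iff hT hc).mpr
    ⟨by rw [haT, Finset.mem_singleton]; omega, hcompT⟩
  have := hTfix.2 a' hAdd a hmemTa
  omega

lemma allfixed_unique {lam : List ℕ} {n : ℕ} (hch : lam.Chain' (· > ·))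
    {T U : ℕ × ℕ → Finset ℕ} (hT : Valid lam n T) (hU : Valid lam n U)
    (hTf : ∀ c ∈ cells lam, Fixed lam n T c)
    (hUf : ∀ c ∈ cells lam, Fixed lam n U c) : T = U := by
  have main : ∀ N : ℕ, ∀ c ∈ cells lam, keyv lam c = N → T c = U c := by
    intro N
    induction N using Nat.strong_induction_on with
    | _ N ih =>
      intro c hc hkey
      have IH : ∀ d ∈ cells lam, keyv lam d < keyv lam c → T d = U d := by
        intro d hd hlt
        exact ih (keyv lam d) (by omega) d hd rfl
      obtain ⟨a, haT⟩ := Finset.card_eq_one.mp (hTf c hc).1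
      obtain ⟨a', haU⟩ := Finset.card_eq_one.mp (hUf c hc).1
      have h1 : a' ≤ a := fixed_le hch hT hU hc (hTf c hc) IH haT haU
      have h2 : a ≤ a' := fixed_le hch hU hT hc (hUf c hc)
        (fun d hd hlt => (IH d hd hlt).symm) haU haT
      rw [haT, haU]
      congr 1
      omega
  funext e
  by_cases he : e ∈ cells lam
  · exact main (keyv lam e) e he rfl
  · rw [hT.1.support e he, hU.1.support e he]

lemma TminP_valid {lam : List ℕ} {n : ℕ} (h : IsStrictPartition lam)
    (hn : lam.length ≤ n) : Valid lam n (TminP lam) := by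
  have hmem : ∀ e x, x ∈ TminP lam e → e ∈ cells lam ∧ x = 2 * e.1 := by
    intro e x hx
    unfold TminP at hx
    by_cases he : e ∈ sCells lam []
    · rw [if_pos he, Finset.mem_singleton] at hx
      exact ⟨he, hx⟩
    · rw [if_neg he] at hx
      exact absurd hx (Finset.notMem_empty x)
  refine ⟨⟨?_, ?_, ?_, ?_, ?_, ?_, ?_⟩, ?_⟩
  · intro e he
    unfold TminP
    rw [if_neg he]
  · intro e he
    unfold TminP
    rw [if_pos he]
    exact ⟨2 * e.1, Finset.mem_singleton_self _⟩
  · intro e x hx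
    obtain ⟨he, rfl⟩ := hmem e x hx
    have := mem_cells.mp he
    constructor <;> omega
  · intro i j h1 h2 a ha b hb
    obtain ⟨-, rfl⟩ := hmem _ a ha
    obtain ⟨-, rfl⟩ := hmem _ b hb
    omega
  · intro i j h1 h2 a ha b hb
    obtain ⟨-, rfl⟩ := hmem _ a ha
    obtain ⟨-, rfl⟩ := hmem _ b hb
    simp only
    omega
  · intro a hpar i i' j ha ha'
    obtain ⟨-, h1⟩ := hmem _ a ha
    obtain ⟨-, h2⟩ := hmem _ a ha'
    simp only at h1 h2
    omega
  · intro a hpar i j j' ha ha'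
    obtain ⟨-, h1⟩ := hmem _ a ha
    simp only at h1
    omega
  · intro i x hx
    obtain ⟨-, rfl⟩ := hmem _ x hx
    simp only
    omega

noncomputable def psi (lam : List ℕ) (T : ℕ × ℕ → Finset ℕ) : ℤ :=
  ∑ c ∈ cells lam, (2 * (((T c).sup id : ℕ) : ℤ) - ((T c).card : ℤ))

lemma psi_update {lam : List ℕ} {T : ℕ × ℕ → Finset ℕ} {X : Finset ℕ}
    {c : ℕ × ℕ} (hc : c ∈ cells lam) :
    psi lam (Function.update T c X) =
      psi lam T + ((2 * ((X.sup id : ℕ) : ℤ) - (X.card : ℤ)) -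
        (2 * (((T c).sup id : ℕ) : ℤ) - (T c).card)) := by
  unfold psi
  rw [Finset.sum_eq_sum_sdiff_singleton_add hc, Finset.sum_eq_sum_sdiff_singleton_add hc
    (fun e => 2 * (((T e).sup id : ℕ) : ℤ) - ((T e).card : ℤ))]
  have hcong : ∀ e ∈ cells lam \ {c},
      2 * (((Function.update T c X e).sup id : ℕ) : ℤ) - ((Function.update T c X e).card : ℤ) =
      2 * (((T e).sup id : ℕ) : ℤ) - ((T e).card : ℤ) := by
    intro e he
    rw [Finset.mem_sdiff, Finset.mem_singleton] at he
    rw [Function.update_of_ne he.2]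
  rw [Finset.sum_congr rfl hcong, Function.update_self]
  ring

lemma exists_allfixed {lam : List ℕ} {n : ℕ} (h : IsStrictPartition lam)
    (hn : lam.length ≤ n) :
    ∃ T ∈ Sfin lam n, ∀ c ∈ cells lam, Fixed lam n T c := by
  have hSne : (Sfin lam n).Nonempty := ⟨TminP lam, mem_Sfin.mpr (TminP_valid h hn)⟩
  obtain ⟨T, hTmem, hTmax⟩ := Finset.exists_max_image (Sfin lam n) (psi lam) hSne
  have hT : Valid lam n T := mem_Sfin.mp hTmem
  refine ⟨T, hTmem, ?_⟩
  intro c hc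
  by_contra hnf
  have hne : (T c).Nonempty := hT.1.cellNonempty c hc
  by_cases hbig : (bigSet lam n T c).Nonempty
  · -- could add a big letter: psi increases
    obtain ⟨b, hb⟩ := hbig
    obtain ⟨⟨hbnotin, hbV⟩, hgt⟩ := mem_bigSet.mp hb
    have hUmem : addL T c b ∈ Sfin lam n := mem_Sfin.mpr hbV
    have hpsi := psi_update (T := T) (X := insert b (T c)) hc
    have hsup : (insert b (T c)).sup id = b := by
      rw [Finset.sup_insert]
      have : (T c).sup id ≤ b := le_of_lt (hgt _ (sup_id_mem hne))
      simp only [id]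
      exact sup_eq_left.mpr this
    have hcard : (insert b (T c)).card = (T c).card + 1 :=
      Finset.card_insert_of_notMem hbnotin
    have hlt : psi lam T < psi lam (addL T c b) := by
      rw [show addL T c b = Function.update T c (insert b (T c)) from rfl, hpsi,
        hsup, hcard]
      have h1 : (T c).sup id < b := hgt _ (sup_id_mem hne)
      have h2 : ((T c).card : ℤ) ≤ (((T c).sup id : ℕ) : ℤ) := by
        have : (T c).card ≤ (T c).sup id := by
          have hsub : T c ⊆ Finset.Icc 1 ((T c).sup id) := by
            intro x hx
            rw [Finset.mem_Icc]
            exact ⟨(hT.1.inRange c x hx).1, le_sup_id hx⟩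
          have := Finset.card_le_card hsub
          rw [Nat.card_Icc] at this
          omega
        exact_mod_cast this
      push_cast
      omega
    have := hTmax _ hUmem
    omega
  · -- some cell has ≥ 2 letters: remove the min
    have hcard2 : 2 ≤ (T c).card := card_ge_two_of_nf hT hc hnf hbig
    set mn := (T c).min' hne with hmndef
    have hmnmem : (T c).min' hne ∈ T c := Finset.min'_mem _ _
    have hX : ((T c).erase mn).Nonempty := by
      rw [← Finset.card_pos, Finset.card_erase_of_mem hmnmem]
      omega
    have hUV : Valid lam n (remL T c mn) := remove_valid hT (fun _ => hX)
    have hUmem : remL T c mn ∈ Sfin lam n := mem_Sfin.mpr hUV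
    have hpsi := psi_update (T := T) (X := (T c).erase mn) hc
    have hsup : ((T c).erase mn).sup id = (T c).sup id := by
      apply le_antisymm
      · exact Finset.sup_mono (Finset.erase_subset _ _)
      · apply le_sup_id
        rw [Finset.mem_erase]
        refine ⟨?_, sup_id_mem hne⟩
        rw [sup_id_eq_max' hne, hmndef]
        have := Finset.min'_lt_max'_of_card (T c) (by omega)
        omega
    have hcard : ((T c).erase mn).card + 1 = (T c).card := by
      rw [Finset.card_erase_of_mem hmnmem]
      omega
    have hlt : psi lam T < psi lam (remL T c mn) := by
      rw [show remL T c mn = Function.update T c ((T c).erase mn) from rfl, hpsi,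
        hsup]
      have : (((T c).erase mn).card : ℤ) + 1 = ((T c).card : ℤ) := by
        exact_mod_cast hcard
      omega
    have := hTmax _ hUmem
    omega

end GPaux

namespace GPaux

open Finset
open scoped Classical

lemma tabSize_ge {lam : List ℕ} {n : ℕ} {T : ℕ × ℕ → Finset ℕ}
    (h : IsStrictPartition lam) (hT : Valid lam n T) :
    lam.sum ≤ tabSize lam [] T := by
  rw [← card_cells h]
  unfold tabSize
  calc (cells lam).card = ∑ _c ∈ cells lam, 1 := Finset.card_eq_sum_ones _
    _ ≤ ∑ c ∈ cells lam, (T c).card := Finset.sum_le_sum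
        (fun c hc => Finset.card_pos.mpr (hT.1.cellNonempty c hc))

lemma tabSize_allfixed {lam : List ℕ} {n : ℕ} {T : ℕ × ℕ → Finset ℕ}
    (h : IsStrictPartition lam)
    (hf : ∀ c ∈ cells lam, Fixed lam n T c) :
    tabSize lam [] T = lam.sum := by
  rw [← card_cells h]
  unfold tabSize
  rw [Finset.card_eq_sum_ones]
  exact Finset.sum_congr rfl (fun c hc => (hf c hc).1)

lemma NF_nonempty_iff {lam : List ℕ} {n : ℕ} {T : ℕ × ℕ → Finset ℕ} :
    (NFset lam n T).Nonempty ↔ ¬ ∀ c ∈ cells lam, Fixed lam n T c := by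
  constructor
  · rintro ⟨c, hc⟩ hall
    rw [NFset, Finset.mem_filter] at hc
    exact hc.2 (hall c hc.1)
  · intro hnall
    push_neg at hnall
    obtain ⟨c, hc, hnf⟩ := hnall
    exact ⟨c, Finset.mem_filter.mpr ⟨hc, hnf⟩⟩

lemma sign_sum {lam : List ℕ} {n : ℕ} (h : IsStrictPartition lam)
    (hn : lam.length ≤ n) :
    ∑ T ∈ Sfin lam n, (-1 : ℚ) ^ (tabSize lam [] T - lam.sum) = 1 := by
  have hch := h.1
  rw [← Finset.sum_filter_add_sum_filter_not (Sfin lam n)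
    (fun T => ∀ c ∈ cells lam, Fixed lam n T c)]
  have hzero : ∑ T ∈ (Sfin lam n).filter
      (fun T => ¬ ∀ c ∈ cells lam, Fixed lam n T c),
      (-1 : ℚ) ^ (tabSize lam [] T - lam.sum) = 0 := by
    apply Finset.sum_involution (fun T _ => Phi lam n T)
    · -- f a + f (g a) = 0
      intro T hTm
      rw [Finset.mem_filter] at hTm
      obtain ⟨hTS, hnall⟩ := hTm
      have hT := mem_Sfin.mp hTS
      have hNF : (NFset lam n T).Nonempty := NF_nonempty_iff.mpr hnall
      obtain ⟨hPV, hPNF, hPP, hts⟩ := Phi_spec hch hT hNF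
      have hge1 := tabSize_ge h hT
      have hge2 := tabSize_ge h hPV
      rcases hts with hts | hts
      · have he : tabSize lam [] (Phi lam n T) - lam.sum =
            (tabSize lam [] T - lam.sum) + 1 := by omega
        rw [he, pow_succ]
        ring
      · have he : tabSize lam [] T - lam.sum =
            (tabSize lam [] (Phi lam n T) - lam.sum) + 1 := by omega
        rw [he, pow_succ]
        ring
    · -- f a ≠ 0 → g a ≠ a
      intro T hTm _
      rw [Finset.mem_filter] at hTm
      obtain ⟨hTS, hnall⟩ := hTm
      have hT := mem_Sfin.mp hTS
      have hNF : (NFset lam n T).Nonempty := NF_nonempty_iff.mpr hnall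
      obtain ⟨hPV, hPNF, hPP, hts⟩ := Phi_spec hch hT hNF
      intro heq
      rw [heq] at hts
      omega
    · -- g maps into s
      intro T hTm
      rw [Finset.mem_filter] at hTm ⊢
      obtain ⟨hTS, hnall⟩ := hTm
      have hT := mem_Sfin.mp hTS
      have hNF : (NFset lam n T).Nonempty := NF_nonempty_iff.mpr hnall
      obtain ⟨hPV, hPNF, hPP, hts⟩ := Phi_spec hch hT hNF
      exact ⟨mem_Sfin.mpr hPV, NF_nonempty_iff.mp hPNF⟩
    · -- involution
      intro T hTm
      rw [Finset.mem_filter] at hTm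
      obtain ⟨hTS, hnall⟩ := hTm
      have hT := mem_Sfin.mp hTS
      have hNF : (NFset lam n T).Nonempty := NF_nonempty_iff.mpr hnall
      exact (Phi_spec hch hT hNF).2.2.1
  rw [hzero, add_zero]
  obtain ⟨T0, hT0mem, hT0f⟩ := exists_allfixed h hn
  have hsingle : (Sfin lam n).filter
      (fun T => ∀ c ∈ cells lam, Fixed lam n T c) = {T0} := by
    rw [Finset.eq_singleton_iff_unique_mem]
    refine ⟨Finset.mem_filter.mpr ⟨hT0mem, hT0f⟩, ?_⟩
    intro U hU
    rw [Finset.mem_filter] at hU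
    exact allfixed_unique hch (mem_Sfin.mp hU.1) (mem_Sfin.mp hT0mem) hU.2 hT0f
  rw [hsingle, Finset.sum_singleton, tabSize_allfixed h hT0f]
  simp

lemma weight_sum {lam : List ℕ} {n : ℕ} {T : ℕ × ℕ → Finset ℕ}
    (hT : Valid lam n T) :
    ∑ k ∈ Finset.Icc 1 n, tabWeight lam [] T k = tabSize lam [] T := by
  unfold tabWeight tabSize
  rw [Finset.sum_comm]
  apply Finset.sum_congr rfl
  intro c _
  symm
  apply Finset.card_eq_sum_card_fiberwise
  intro a ha
  have := hT.1.inRange c a ha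
  simp only [Finset.mem_coe, Finset.mem_Icc]
  omega

end GPaux

theorem gp_special_value' (lam : List ℕ) (n : ℕ)
    (h : IsStrictPartition lam) (hn : lam.length ≤ n) (β : ℚ) (hβ : β ≠ 0) :
    GPspec lam [] n (fun _ => β) (-β⁻¹) = β ^ lam.sum := by
  classical
  have hset : {T : ℕ × ℕ → Finset ℕ | IsSSVTP lam [] n T} =
      ↑(GPaux.Sfin lam n) := by
    ext T
    rw [Set.mem_setOf_eq, Finset.mem_coe, GPaux.mem_Sfin]
  rw [GPspec, hset, finsum_mem_coe_finset]
  have hterm : ∀ T ∈ GPaux.Sfin lam n,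
      (-β⁻¹) ^ (tabSize lam [] T - (lam.sum - List.sum [])) *
        ∏ k ∈ Finset.Icc 1 n, (fun _ => β) k ^ tabWeight lam [] T k
      = (-1 : ℚ) ^ (tabSize lam [] T - lam.sum) * β ^ lam.sum := by
    intro T hTm
    have hT := GPaux.mem_Sfin.mp hTm
    have hge := GPaux.tabSize_ge h hT
    have hprod : ∏ k ∈ Finset.Icc 1 n, (fun _ => β) k ^ tabWeight lam [] T k
        = β ^ tabSize lam [] T := by
      simp only
      rw [Finset.prod_pow_eq_pow_sum, GPaux.weight_sum hT]
    rw [hprod]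
    simp only [List.sum_nil, Nat.sub_zero]
    set d := tabSize lam [] T - lam.sum with hd
    have hts : tabSize lam [] T = lam.sum + d := by omega
    rw [hts, pow_add]
    rw [show -β⁻¹ = (-1 : ℚ) * β⁻¹ from by ring, mul_pow]
    rw [show ((-1 : ℚ)) ^ d * β⁻¹ ^ d * (β ^ lam.sum * β ^ d)
        = (-1 : ℚ) ^ d * ((β⁻¹ * β) ^ d * β ^ lam.sum) from by rw [mul_pow]; ring]
    rw [inv_mul_cancel₀ hβ, one_pow, one_mul]
  rw [Finset.sum_congr rfl hterm, ← Finset.sum_mul, GPaux.sign_sum h hn, one_mul]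


/-- `GP_λ(β,…,β | -β⁻¹) = β^{|λ|}`. -/
theorem gp_special_value (lam : List ℕ) (n : ℕ)
    (h : IsStrictPartition lam) (hn : lam.length ≤ n) (β : ℚ) (hβ : β ≠ 0) :
    GPspec lam [] n (fun _ => β) (-β⁻¹) = β ^ lam.sum := by
  exact gp_special_value' lam n h hn β hβ
end
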